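/- arXiv:2209.11111 — 8 statements merged into one kernel-verified Lean document; each statement's English description precedes it below -/
import Mathlib

section
/- For all real numbers r1, r2 ≥ 0 with (r1, r2) ≠ (0, 0), one has K₀(√(r1² + r2²)) = ∫₁^∞ (u² − 1)^{−1/2} · exp(−((r1 + r2)/√2)·u) · cos(((r1 − r2)/√2)·√(u² − 1)) du. -/
/-!
Put `a = z cos θ`, `b = z sin θ` and `w(u) = √(u² - 1)`. The `θ`-derivative of the integrand
`e^{-au} cos(b w) / w` is the `u`-derivative of `e^{-au} sin(b w)` (a Cauchy–Riemann identity: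
after `u = cosh s` the integrand is the real part of `e^{-z cosh(s + iθ)}`). That primitive vanishes at
`u = 1` and at infinity, so differentiating under the integral sign shows that the integral does
not depend on `θ ∈ (-π/2, π/2)`; at `θ = 0` it is `K₀(z)`. The theorem is the case
`z = √(r₁² + r₂²)`, `a = (r₁ + r₂)/√2`, `b = (r₁ - r₂)/√2`.
-/

open MeasureTheory

noncomputable section

/-- The modified Bessel function of the second kind `K₀`, via its integral representation
`K₀(z) = ∫₁^∞ e^{−zt} (t² − 1)^{−1/2} dt`. -/
def K0 (z : ℝ) : ℝ := ∫ t in Set.Ioi (1:ℝ), Real.exp (-z*t) / Real.sqrt (t^2 - 1)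

open Real Set Filter Topology

namespace BesselK0

variable {a b u : ℝ}

lemma hasDerivAt_sqrt_sq_sub_one (hu : 1 < u) :
    HasDerivAt (fun u : ℝ => √(u ^ 2 - 1)) (u / √(u ^ 2 - 1)) u := by
  have hw : √(u ^ 2 - 1) ≠ 0 := (sqrt_pos.2 (by nlinarith)).ne'
  convert (((hasDerivAt_pow 2 u).sub_const 1).sqrt (by nlinarith)) using 1
  field_simp
  ring

lemma one_le_div_sqrt_sq_sub_one (hu : 1 < u) : 1 ≤ u / √(u ^ 2 - 1) := by
  rw [one_le_div (sqrt_pos.2 (by nlinarith))]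
  calc √(u ^ 2 - 1) ≤ √(u ^ 2) := sqrt_le_sqrt (by linarith)
    _ = u := sqrt_sq (by linarith)

lemma div_sqrt_sq_sub_one_le_two (hu : 2 ≤ u) : u / √(u ^ 2 - 1) ≤ 2 := by
  rw [div_le_iff₀ (sqrt_pos.2 (by nlinarith))]
  calc u = 2 * √((u / 2) ^ 2) := by rw [sqrt_sq (by linarith)]; ring
    _ ≤ 2 * √(u ^ 2 - 1) := by gcongr; nlinarith

lemma continuousOn_div_sqrt_sq_sub_one :
    ContinuousOn (fun u : ℝ => u / √(u ^ 2 - 1)) (Ioi 1) := by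
  fun_prop (disch := intro u (hu : 1 < u); exact (sqrt_pos.2 (by nlinarith)).ne')

lemma integrableOn_exp_mul_div_sqrt {c : ℝ} (hc : 0 < c) :
    IntegrableOn (fun u : ℝ => exp (-c * u) * (u / √(u ^ 2 - 1))) (Ioi 1) := by
  have hmeas : ∀ s ⊆ Ioi (1 : ℝ), MeasurableSet s →
      AEStronglyMeasurable (fun u : ℝ => exp (-c * u) * (u / √(u ^ 2 - 1)))
        (volume.restrict s) :=
    fun s hs hsm => (((by fun_prop : Continuous fun u : ℝ => exp (-c * u)).continuousOn.mul
      continuousOn_div_sqrt_sq_sub_one).mono hs).aestronglyMeasurable hsm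
  rw [← Ioc_union_Ioi_eq_Ioi one_le_two]
  refine IntegrableOn.union ?_ ?_
  · -- near `1`, `u / √(u² - 1)` is integrable as the nonnegative derivative of `√(u² - 1)`
    have hderiv : IntegrableOn (fun u : ℝ => u / √(u ^ 2 - 1)) (Ioc 1 2) :=
      intervalIntegral.integrableOn_deriv_of_nonneg (by fun_prop)
        (fun u hu => hasDerivAt_sqrt_sq_sub_one hu.1)
        (fun u hu => div_nonneg (by linarith [hu.1]) (sqrt_nonneg _))
    refine hderiv.mono' (hmeas _ Ioc_subset_Ioi_self measurableSet_Ioc) ?_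
    filter_upwards [ae_restrict_mem measurableSet_Ioc] with u hu
    rw [norm_mul, norm_of_nonneg (exp_pos _).le,
      norm_of_nonneg (div_nonneg (by linarith [hu.1]) (sqrt_nonneg _))]
    exact mul_le_of_le_one_left (div_nonneg (by linarith [hu.1]) (sqrt_nonneg _))
      (exp_le_one_iff.2 (by nlinarith [hu.1]))
  · refine ((exp_neg_integrableOn_Ioi 2 hc).mul_const 2).mono'
      (hmeas _ (Ioi_subset_Ioi one_le_two) measurableSet_Ioi) ?_
    filter_upwards [ae_restrict_mem measurableSet_Ioi] with u (hu : 2 < u)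
    rw [norm_mul, norm_of_nonneg (exp_pos _).le,
      norm_of_nonneg (div_nonneg (by linarith) (sqrt_nonneg _))]
    exact mul_le_mul_of_nonneg_left (div_sqrt_sq_sub_one_le_two hu.le) (exp_pos _).le

def cosKernel (a b u : ℝ) : ℝ := (√(u ^ 2 - 1))⁻¹ * exp (-a * u) * cos (b * √(u ^ 2 - 1))

def sinKernel (a b u : ℝ) : ℝ := exp (-a * u) * sin (b * √(u ^ 2 - 1))

def sinKernelDeriv (a b u : ℝ) : ℝ :=
  exp (-a * u) *
    (b * (u / √(u ^ 2 - 1)) * cos (b * √(u ^ 2 - 1)) - a * sin (b * √(u ^ 2 - 1)))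

lemma hasDerivAt_sinKernel (hu : 1 < u) :
    HasDerivAt (sinKernel a b) (sinKernelDeriv a b u) u :=
  ((((hasDerivAt_id u).const_mul (-a)).exp).mul
    ((hasDerivAt_sqrt_sq_sub_one hu).const_mul b).sin).congr_deriv
    (by simp only [sinKernelDeriv, id]; ring)

lemma norm_cosKernel_le (hu : 1 < u) :
    ‖cosKernel a b u‖ ≤ exp (-a * u) * (u / √(u ^ 2 - 1)) := by
  have hw : 0 < √(u ^ 2 - 1) := sqrt_pos.2 (by nlinarith)
  rw [cosKernel, norm_mul, norm_mul, norm_inv, norm_of_nonneg hw.le, norm_of_nonneg (exp_pos _).le]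
  calc (√(u ^ 2 - 1))⁻¹ * exp (-a * u) * ‖cos (b * √(u ^ 2 - 1))‖
      ≤ (√(u ^ 2 - 1))⁻¹ * exp (-a * u) * 1 := by gcongr; exact abs_cos_le_one _
    _ = exp (-a * u) * (1 / √(u ^ 2 - 1)) := by ring
    _ ≤ exp (-a * u) * (u / √(u ^ 2 - 1)) := by gcongr

lemma norm_sinKernelDeriv_le (hu : 1 < u) :
    ‖sinKernelDeriv a b u‖ ≤ (|a| + |b|) * (exp (-a * u) * (u / √(u ^ 2 - 1))) := by
  have hq := one_le_div_sqrt_sq_sub_one hu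
  rw [sinKernelDeriv, norm_mul, norm_of_nonneg (exp_pos _).le, mul_left_comm]
  refine mul_le_mul_of_nonneg_left ?_ (exp_pos _).le
  calc ‖b * (u / √(u ^ 2 - 1)) * cos (b * √(u ^ 2 - 1)) - a * sin (b * √(u ^ 2 - 1))‖
      ≤ |b| * (u / √(u ^ 2 - 1)) * 1 + |a| * 1 := by
        refine (norm_sub_le _ _).trans (add_le_add ?_ ?_) <;>
          simp only [norm_mul, norm_eq_abs, abs_of_pos (zero_lt_one.trans_le hq)] <;>
          gcongr <;> first | exact abs_cos_le_one _ | exact abs_sin_le_one _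
    _ ≤ (|a| + |b|) * (u / √(u ^ 2 - 1)) := by nlinarith [abs_nonneg a, abs_nonneg b]

lemma continuousOn_cosKernel : ContinuousOn (cosKernel a b) (Ioi 1) := by
  unfold cosKernel
  fun_prop (disch := intro u (hu : 1 < u); exact (sqrt_pos.2 (by nlinarith)).ne')

lemma continuousOn_sinKernelDeriv : ContinuousOn (sinKernelDeriv a b) (Ioi 1) := by
  unfold sinKernelDeriv
  fun_prop (disch := intro u (hu : 1 < u); exact (sqrt_pos.2 (by nlinarith)).ne')

lemma integrableOn_cosKernel (ha : 0 < a) : IntegrableOn (cosKernel a b) (Ioi 1) :=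
  (integrableOn_exp_mul_div_sqrt ha).mono'
    (continuousOn_cosKernel.aestronglyMeasurable measurableSet_Ioi)
    ((ae_restrict_mem measurableSet_Ioi).mono fun _ => norm_cosKernel_le)

lemma integrableOn_sinKernelDeriv (ha : 0 < a) : IntegrableOn (sinKernelDeriv a b) (Ioi 1) :=
  ((integrableOn_exp_mul_div_sqrt ha).const_mul _).mono'
    (continuousOn_sinKernelDeriv.aestronglyMeasurable measurableSet_Ioi)
    ((ae_restrict_mem measurableSet_Ioi).mono fun _ => norm_sinKernelDeriv_le)

lemma tendsto_sinKernel_atTop (ha : 0 < a) : Tendsto (sinKernel a b) atTop (𝓝 0) := by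
  have hexp : Tendsto (fun u => exp (-a * u)) atTop (𝓝 0) :=
    tendsto_exp_atBot.comp (tendsto_id.const_mul_atTop_of_neg (neg_lt_zero.2 ha))
  refine squeeze_zero_norm (fun u => ?_) hexp
  rw [sinKernel, norm_mul, norm_of_nonneg (exp_pos _).le]
  exact mul_le_of_le_one_right (exp_pos _).le (abs_sin_le_one _)

lemma integral_sinKernelDeriv (ha : 0 < a) : ∫ u in Ioi 1, sinKernelDeriv a b u = 0 := by
  rw [integral_Ioi_of_hasDerivAt_of_tendsto
    (by unfold sinKernel; fun_prop : Continuous (sinKernel a b)).continuousWithinAt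
    (fun _ => hasDerivAt_sinKernel) (integrableOn_sinKernelDeriv ha) (tendsto_sinKernel_atTop ha)]
  simp [sinKernel]

lemma hasDerivAt_cosKernel_polar (z : ℝ) {θ : ℝ} (hu : 1 < u) :
    HasDerivAt (fun θ => cosKernel (z * cos θ) (z * sin θ) u)
      (sinKernelDeriv (z * cos θ) (z * sin θ) u) θ := by
  have hw : √(u ^ 2 - 1) ≠ 0 := (sqrt_pos.2 (by nlinarith)).ne'
  refine ((((((hasDerivAt_cos θ).const_mul z).neg.mul_const u).exp).const_mul
    (√(u ^ 2 - 1))⁻¹).mul (((hasDerivAt_sin θ).const_mul z).mul_const (√(u ^ 2 - 1))).cos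
    ).congr_deriv ?_
  simp only [sinKernelDeriv, Pi.neg_apply]
  field_simp
  ring

lemma hasDerivAt_integral_cosKernel_polar {z θ : ℝ} (hz : 0 < z)
    (hθ : θ ∈ Ioo (-(π / 2)) (π / 2)) :
    HasDerivAt (fun θ => ∫ u in Ioi 1, cosKernel (z * cos θ) (z * sin θ) u) 0 θ := by
  have hθ' : |θ| < π / 2 := abs_lt.2 hθ
  set φ := (|θ| + π / 2) / 2 with hφ_def
  have hφ : 0 < cos φ :=
    cos_pos_of_mem_Ioo ⟨by linarith [abs_nonneg θ, pi_pos], by linarith⟩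
  have hs : Icc (-φ) φ ∈ 𝓝 θ :=
    Icc_mem_nhds (by linarith [neg_abs_le θ]) (by linarith [le_abs_self θ])
  have hcos : ∀ ϑ ∈ Icc (-φ) φ, cos φ ≤ cos ϑ := fun ϑ hϑ => by
    rw [← cos_abs ϑ]
    exact cos_le_cos_of_nonneg_of_le_pi (abs_nonneg _) (by linarith [pi_pos]) (abs_le.2 hϑ)
  have h_bound : ∀ᵐ u ∂volume.restrict (Ioi 1), ∀ ϑ ∈ Icc (-φ) φ,
      ‖sinKernelDeriv (z * cos ϑ) (z * sin ϑ) u‖ ≤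
        2 * z * (exp (-(z * cos φ) * u) * (u / √(u ^ 2 - 1))) := by
    filter_upwards [ae_restrict_mem measurableSet_Ioi] with u (hu : 1 < u) ϑ hϑ
    refine (norm_sinKernelDeriv_le hu).trans ?_
    have hq : 0 ≤ u / √(u ^ 2 - 1) := div_nonneg (by linarith) (sqrt_nonneg _)
    have hz' : |z * cos ϑ| + |z * sin ϑ| ≤ 2 * z := by
      rw [abs_mul, abs_mul, abs_of_pos hz]
      nlinarith [abs_cos_le_one ϑ, abs_sin_le_one ϑ]
    gcongr
    nlinarith [hcos ϑ hϑ]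
  obtain ⟨-, key⟩ := hasDerivAt_integral_of_dominated_loc_of_deriv_le hs
    (F := fun ϑ u => cosKernel (z * cos ϑ) (z * sin ϑ) u)
    (F' := fun ϑ u => sinKernelDeriv (z * cos ϑ) (z * sin ϑ) u)
    (Eventually.of_forall fun _ => continuousOn_cosKernel.aestronglyMeasurable measurableSet_Ioi)
    (integrableOn_cosKernel (mul_pos hz (cos_pos_of_mem_Ioo hθ)))
    (continuousOn_sinKernelDeriv.aestronglyMeasurable measurableSet_Ioi) h_bound
    ((integrableOn_exp_mul_div_sqrt (mul_pos hz hφ)).const_mul _)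
    ((ae_restrict_mem measurableSet_Ioi).mono fun u hu ϑ _ => hasDerivAt_cosKernel_polar z hu)
  rwa [integral_sinKernelDeriv (mul_pos hz (cos_pos_of_mem_Ioo hθ))] at key

lemma integral_cosKernel_polar {z θ : ℝ} (hz : 0 < z) (hθ : θ ∈ Ioo (-(π / 2)) (π / 2)) :
    ∫ u in Ioi 1, cosKernel (z * cos θ) (z * sin θ) u = ∫ u in Ioi 1, cosKernel z 0 u := by
  have hderiv := fun ϑ (hϑ : ϑ ∈ Ioo (-(π / 2)) (π / 2)) =>
    hasDerivAt_integral_cosKernel_polar hz hϑ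
  simpa using isOpen_Ioo.is_const_of_deriv_eq_zero isPreconnected_Ioo
    (fun ϑ hϑ => (hderiv ϑ hϑ).differentiableAt.differentiableWithinAt)
    (fun ϑ hϑ => (hderiv ϑ hϑ).deriv) hθ
    (show (0 : ℝ) ∈ Ioo (-(π / 2)) (π / 2) by constructor <;> linarith [pi_pos])

lemma exists_polar_angle_of_pos {a b : ℝ} (ha : 0 < a) :
    ∃ θ ∈ Ioo (-(π / 2)) (π / 2),
      √(a ^ 2 + b ^ 2) * cos θ = a ∧ √(a ^ 2 + b ^ 2) * sin θ = b := by
  have hs : 0 < √(1 + (b / a) ^ 2) := sqrt_pos.2 (by positivity)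
  have hz : √(a ^ 2 + b ^ 2) = a * √(1 + (b / a) ^ 2) := by
    rw [show a ^ 2 + b ^ 2 = a ^ 2 * (1 + (b / a) ^ 2) by field_simp, sqrt_mul (sq_nonneg a),
      sqrt_sq ha.le]
  refine ⟨arctan (b / a), arctan_mem_Ioo _, ?_, ?_⟩
  · rw [cos_arctan, hz]; field_simp
  · rw [sin_arctan, hz]; field_simp

lemma K0_eq_integral_cosKernel (z : ℝ) : K0 z = ∫ u in Ioi 1, cosKernel z 0 u := by
  simp only [K0, cosKernel, zero_mul, cos_zero, mul_one, div_eq_inv_mul]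

end BesselK0

theorem stmt0 (r1 r2 : ℝ) (hr1 : 0 ≤ r1) (hr2 : 0 ≤ r2) (hne : (r1, r2) ≠ (0, 0)) :
    K0 (Real.sqrt (r1^2 + r2^2)) =
      ∫ u in Set.Ioi (1:ℝ),
        (Real.sqrt (u^2 - 1))⁻¹ * Real.exp (-((r1 + r2)/Real.sqrt 2) * u) *
          Real.cos ((r1 - r2)/Real.sqrt 2 * Real.sqrt (u^2 - 1)) := by
  have hsum : 0 < r1 + r2 := by
    by_contra h
    exact hne (Prod.ext (by simp only; linarith) (by simp only; linarith))
  have ha : 0 < (r1 + r2) / √2 := div_pos hsum (sqrt_pos.2 two_pos)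
  have hnorm : ((r1 + r2) / √2) ^ 2 + ((r1 - r2) / √2) ^ 2 = r1 ^ 2 + r2 ^ 2 := by
    rw [div_pow, div_pow, sq_sqrt zero_le_two]; ring
  obtain ⟨θ, hθ, hcos, hsin⟩ :=
    BesselK0.exists_polar_angle_of_pos (b := (r1 - r2) / √2) ha
  rw [hnorm] at hcos hsin
  rw [BesselK0.K0_eq_integral_cosKernel,
    ← BesselK0.integral_cosKernel_polar (sqrt_pos.2 (by nlinarith)) hθ, hcos, hsin]
  rfl

end
end

section
/- For all real numbers r1, r2 ≥ 0 with (r1, r2) ≠ (0, 0), one has ((r1 + r2)/√(r1² + r2²)) · K₁(√(r1² + r2²)) = ∫₁^∞ (√2 · u / √(u² − 1)) · exp(−((r1 + r2)/√2)·u) · cos(((r1 − r2)/√2)·√(u² − 1)) du. -/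
/-!
Put `a = (r1 + r2)/√2`, `b = (r1 - r2)/√2` and `z = √(a² + b²) = √(r1² + r2²)`. Substituting
`u = cosh θ` turns the right side into `√2 · C` with `C = ∫₀^∞ cosh θ cos(b sinh θ) e^{-a cosh θ} dθ`,
and substituting `t = cosh θ` and integrating by parts gives `K₁(z) = ∫₀^∞ cosh θ e^{-z cosh θ} dθ`.
Write `a + ib = z e^{iφ}` with `0 ≤ φ < π/2`. Since `z cosh(θ + iφ) = a cosh θ + ib sinh θ`, moving
the line of integration of `e^{-z cosh w} cosh w` from `Im w = φ` down to the real axis (the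
vertical side at `θ = 0` only adds an imaginary amount) gives `cos φ · C + sin φ · S = K₁(z)`, where
`S = ∫₀^∞ sinh θ sin(b sinh θ) e^{-a cosh θ} dθ`. Integrating the derivative of
`sin(b sinh θ) e^{-a cosh θ}` gives `a S = b C`, and together `C = (a/z) K₁(z)`.
-/

open MeasureTheory

noncomputable section

/-- The modified Bessel function of the second kind `K₁`, via its integral representation
`K₁(z) = z · ∫₁^∞ e^{−zt} (t² − 1)^{1/2} dt`. -/
def K1 (z : ℝ) : ℝ := z * ∫ t in Set.Ioi (1:ℝ), Real.exp (-z*t) * Real.sqrt (t^2 - 1)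

open Real Set Filter Topology Asymptotics
open Complex (I)

lemma tendsto_cosh_atTop : Tendsto cosh atTop atTop :=
  tendsto_atTop_mono (fun x => by rw [cosh_eq]; linarith [exp_pos (-x)])
    (tendsto_exp_atTop.atTop_div_const two_pos)

lemma tendsto_cosh_mul_exp_neg_mul_cosh {c : ℝ} (hc : 0 < c) :
    Tendsto (fun θ => cosh θ * exp (-(c * cosh θ))) atTop (𝓝 0) := by
  simpa [neg_mul, Function.comp_def] using
    (tendsto_rpow_mul_exp_neg_mul_atTop_nhds_zero 1 c hc).comp tendsto_cosh_atTop

lemma integrableOn_cosh_pow_mul_exp_neg_mul_cosh (n : ℕ) {c : ℝ} (hc : 0 < c) :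
    IntegrableOn (fun θ => cosh θ ^ n * exp (-(c * cosh θ))) (Ioi 0) := by
  have hpow : (fun t => t ^ n * exp (-(c * t))) =O[atTop] fun t => exp (-(c / 2) * t) := by
    refine ((isLittleO_pow_exp_pos_mul_atTop n (half_pos hc)).isBigO.mul
      (isBigO_refl _ atTop)).congr_right fun t => ?_
    rw [← exp_add]; ring_nf
  have hcosh : (fun θ => exp (-(c / 2) * cosh θ)) =O[atTop] fun θ => exp (-(c / 4) * θ) := by
    refine isBigO_of_le _ fun θ => ?_
    simp only [norm_eq_abs, abs_exp, exp_le_exp]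
    have : θ / 2 ≤ cosh θ := by rw [cosh_eq]; linarith [add_one_le_exp θ, exp_pos (-θ)]
    nlinarith
  exact integrable_of_isBigO_exp_neg (by positivity) (by fun_prop)
    ((hpow.comp_tendsto tendsto_cosh_atTop).trans hcosh)

lemma cosh_image_Ioi_zero : cosh '' Ioi 0 = Ioi 1 := by
  refine (image_subset_iff.2 fun θ hθ => one_lt_cosh.2 hθ.ne').antisymm fun t ht => ?_
  exact ⟨arcosh t, arcosh_pos ht, cosh_arcosh (mem_Ioi.1 ht).le⟩

lemma integral_Ioi_one_eq_integral_sinh_mul_comp_cosh (g : ℝ → ℝ) :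
    ∫ t in Ioi 1, g t = ∫ θ in Ioi 0, sinh θ * g (cosh θ) := by
  rw [← cosh_image_Ioi_zero, integral_image_eq_integral_abs_deriv_smul measurableSet_Ioi
    (fun θ _ => (hasDerivAt_cosh θ).hasDerivWithinAt)
    (cosh_strictMonoOn.injOn.mono Ioi_subset_Ici_self)]
  refine setIntegral_congr_fun measurableSet_Ioi fun θ hθ => ?_
  rw [smul_eq_mul, abs_of_pos (sinh_pos_iff.2 hθ)]

lemma integrableOn_cosh_mul_exp_neg_mul_cosh {c : ℝ} (hc : 0 < c) :
    IntegrableOn (fun θ => cosh θ * exp (-(c * cosh θ))) (Ioi 0) := by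
  simpa using integrableOn_cosh_pow_mul_exp_neg_mul_cosh 1 hc

lemma abs_sinh_le_cosh (θ : ℝ) : |sinh θ| ≤ cosh θ :=
  abs_le_of_sq_le_sq (by rw [cosh_sq]; linarith) (cosh_pos θ).le

lemma K1_eq_integral_cosh_mul_exp_neg_mul_cosh {z : ℝ} (hz : 0 < z) :
    K1 z = ∫ θ in Ioi 0, cosh θ * exp (-(z * cosh θ)) := by
  have hsubst : K1 z = ∫ θ in Ioi 0, z * sinh θ ^ 2 * exp (-(z * cosh θ)) := by
    rw [K1, integral_Ioi_one_eq_integral_sinh_mul_comp_cosh, ← integral_const_mul]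
    refine setIntegral_congr_fun measurableSet_Ioi fun θ hθ => ?_
    rw [cosh_sq, add_sub_cancel_right, sqrt_sq (sinh_pos_iff.2 hθ).le, neg_mul]
    ring
  have hderiv (θ : ℝ) : HasDerivAt (fun θ => -(sinh θ * exp (-(z * cosh θ))))
      (z * sinh θ ^ 2 * exp (-(z * cosh θ)) - cosh θ * exp (-(z * cosh θ))) θ := by
    refine ((hasDerivAt_sinh θ).mul ((hasDerivAt_cosh θ).const_mul z).neg.exp).neg.congr_deriv ?_
    simp only [Pi.neg_apply]; ring
  have hint₁ : IntegrableOn (fun θ => z * sinh θ ^ 2 * exp (-(z * cosh θ))) (Ioi 0) := by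
    refine ((integrableOn_cosh_pow_mul_exp_neg_mul_cosh 2 hz).const_mul z).mono'
      (by fun_prop) (ae_of_all _ fun θ => ?_)
    rw [norm_of_nonneg (by positivity), cosh_sq, mul_assoc]
    gcongr; linarith
  have hint₂ := integrableOn_cosh_mul_exp_neg_mul_cosh hz
  have hlim : Tendsto (fun θ => -(sinh θ * exp (-(z * cosh θ)))) atTop (𝓝 0) := by
    refine squeeze_zero_norm (fun θ => ?_) (tendsto_cosh_mul_exp_neg_mul_cosh hz)
    rw [norm_neg, norm_mul, norm_of_nonneg (exp_pos _).le, norm_eq_abs]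
    gcongr; exact abs_sinh_le_cosh θ
  have hIBP := integral_Ioi_of_hasDerivAt_of_tendsto (by fun_prop) (fun θ _ => hderiv θ)
    (hint₁.sub hint₂) hlim
  rw [integral_sub hint₁ hint₂, sinh_zero, zero_mul, neg_zero, sub_self, sub_eq_zero] at hIBP
  rw [hsubst, hIBP]

namespace Complex

lemma cosh_re (w : ℂ) : (cosh w).re = Real.cosh w.re * Real.cos w.im := by
  obtain ⟨x, y, rfl⟩ : ∃ x y : ℝ, w = x + y * I := ⟨w.re, w.im, (re_add_im w).symm⟩
  simp [cosh_add, cosh_mul_I, sinh_mul_I, ← ofReal_cosh, ← ofReal_sinh, ← ofReal_cos,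
    ← ofReal_sin]

lemma cosh_im (w : ℂ) : (cosh w).im = Real.sinh w.re * Real.sin w.im := by
  obtain ⟨x, y, rfl⟩ : ∃ x y : ℝ, w = x + y * I := ⟨w.re, w.im, (re_add_im w).symm⟩
  simp [cosh_add, cosh_mul_I, sinh_mul_I, ← ofReal_cosh, ← ofReal_sinh, ← ofReal_cos,
    ← ofReal_sin]

lemma norm_cosh_le (w : ℂ) : ‖cosh w‖ ≤ Real.cosh w.re := by
  have h := norm_add_le (exp w) (exp (-w))
  rw [norm_exp, norm_exp, neg_re] at h
  rw [cosh, norm_div, Real.cosh_eq, norm_ofNat]; gcongr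

lemma norm_sinh_le (w : ℂ) : ‖sinh w‖ ≤ Real.cosh w.re := by
  have h := norm_sub_le (exp w) (exp (-w))
  rw [norm_exp, norm_exp, neg_re] at h
  rw [sinh, norm_div, Real.cosh_eq, norm_ofNat]; gcongr

lemma hasDerivAt_exp_neg_mul_cosh_mul_cosh (z w : ℂ) :
    HasDerivAt (fun w => exp (-z * cosh w) * cosh w)
      (exp (-z * cosh w) * (sinh w - z * sinh w * cosh w)) w :=
  (((hasDerivAt_cosh w).const_mul (-z)).cexp.mul (hasDerivAt_cosh w)).congr_deriv (by ring)

lemma norm_exp_neg_mul_cosh_add_mul_I (z θ s : ℝ) :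
    ‖exp (-z * cosh (θ + s * I))‖ = Real.exp (-(z * Real.cos s * Real.cosh θ)) := by
  rw [norm_exp]
  congr 1
  simp only [neg_mul, neg_re, re_ofReal_mul, cosh_re, add_re, ofReal_re, mul_I_re, ofReal_im,
    add_im, mul_I_im, neg_zero, add_zero, zero_add]
  ring

lemma norm_exp_neg_mul_cosh_add_mul_I_le {z φ s : ℝ} (hz : 0 ≤ z) (hφ : φ ≤ π)
    (hs : s ∈ Icc 0 φ) (θ : ℝ) :
    ‖exp (-z * cosh (θ + s * I))‖ ≤ Real.exp (-(z * Real.cos φ * Real.cosh θ)) := by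
  rw [norm_exp_neg_mul_cosh_add_mul_I, Real.exp_le_exp, neg_le_neg_iff]
  have := Real.cosh_pos θ
  gcongr
  exact Real.cos_le_cos_of_nonneg_of_le_pi hs.1 hφ hs.2

lemma norm_sinh_sub_mul_sinh_mul_cosh_le {z : ℝ} (hz : 0 ≤ z) (w : ℂ) :
    ‖sinh w - z * sinh w * cosh w‖ ≤ (1 + z) * Real.cosh w.re ^ 2 := by
  have hsinh := norm_sinh_le w
  have hsinh_cosh : ‖sinh w‖ * ‖cosh w‖ ≤ Real.cosh w.re * Real.cosh w.re :=
    mul_le_mul hsinh (norm_cosh_le w) (norm_nonneg _) (Real.cosh_pos _).le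
  have := Real.one_le_cosh w.re
  refine (norm_sub_le _ _).trans ?_
  rw [norm_mul, norm_mul, norm_real, Real.norm_of_nonneg hz]
  nlinarith

lemma re_exp_neg_mul_cosh_mul_cosh_add_mul_I (z θ φ : ℝ) :
    (exp (-z * cosh (θ + φ * I)) * cosh (θ + φ * I)).re =
      (Real.cos φ * Real.cosh θ * Real.cos (z * Real.sin φ * Real.sinh θ) +
        Real.sin φ * Real.sinh θ * Real.sin (z * Real.sin φ * Real.sinh θ)) *
        Real.exp (-(z * Real.cos φ * Real.cosh θ)) := by
  simp only [neg_mul, mul_re, exp_re, neg_re, ofReal_re, cosh_re, add_re, I_re, mul_zero,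
    ofReal_im, I_im, mul_one, sub_self, add_zero, add_im, mul_im, zero_add, cosh_im, zero_mul,
    sub_zero, neg_im, Real.cos_neg, exp_im, Real.sin_neg, mul_neg, sub_neg_eq_add]
  ring_nf

end Complex

lemma integral_Ioc_deriv_add_mul_I {f : ℂ → ℂ} (hf : Differentiable ℂ f) (w : ℂ)
    {φ : ℝ} (hφ : 0 ≤ φ) :
    ∫ s in Ioc (0 : ℝ) φ, deriv f (w + s * I) * I = f (w + φ * I) - f w := by
  have hderiv (s : ℝ) :
      HasDerivAt (fun s : ℝ => f (w + s * I)) (deriv f (w + s * I) * I) s := by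
    have := (hf _).hasDerivAt.comp (s : ℂ) (((hasDerivAt_id (s : ℂ)).mul_const I).const_add w)
    simpa using this.comp_ofReal
  have hcont : Continuous (deriv f) := (hf.contDiff (n := 1)).continuous_deriv le_rfl
  rw [← intervalIntegral.integral_of_le hφ, intervalIntegral.integral_eq_sub_of_hasDerivAt
    (fun s _ => hderiv s) ((by fun_prop : Continuous _).intervalIntegrable _ _)]
  simp

lemma integral_Ioi_deriv_ofReal_add {f : ℂ → ℂ} (hf : Differentiable ℂ f) (w : ℂ)
    (hint : IntegrableOn (fun θ : ℝ => deriv f (θ + w)) (Ioi 0))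
    (hlim : Tendsto (fun θ : ℝ => f (θ + w)) atTop (𝓝 0)) :
    ∫ θ in Ioi (0 : ℝ), deriv f (θ + w) = -f w := by
  have hderiv (θ : ℝ) : HasDerivAt (fun θ : ℝ => f (θ + w)) (deriv f (θ + w)) θ := by
    have := (hf _).hasDerivAt.comp (θ : ℂ) ((hasDerivAt_id (θ : ℂ)).add_const w)
    simpa using this.comp_ofReal
  simpa using integral_Ioi_of_hasDerivAt_of_tendsto (hderiv 0).continuousAt.continuousWithinAt
    (fun θ _ => hderiv θ) hint hlim

/-- Cauchy's theorem for the half-strip `θ > 0`, `0 ≤ s ≤ φ`; the side at infinity vanishes by the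
decay of `f`. -/
theorem integral_Ioi_sub_eq_neg_I_mul_intervalIntegral {f : ℂ → ℂ} (hf : Differentiable ℂ f)
    {φ : ℝ} (hφ : 0 ≤ φ) {G : ℝ → ℝ} (hG : IntegrableOn G (Ioi 0))
    (hbound : ∀ θ ∈ Ioi (0 : ℝ), ∀ s ∈ Icc 0 φ, ‖deriv f (θ + s * I)‖ ≤ G θ)
    (hlim : ∀ s ∈ Icc 0 φ, Tendsto (fun θ : ℝ => f (θ + s * I)) atTop (𝓝 0)) :
    ∫ θ in Ioi (0 : ℝ), (f (θ + φ * I) - f θ) = -I * ∫ s in 0..φ, f (s * I) := by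
  have hcont : Continuous (deriv f) := (hf.contDiff (n := 1)).continuous_deriv le_rfl
  have hprod : Integrable (Function.uncurry fun (θ s : ℝ) => deriv f (θ + s * I) * I)
      ((volume.restrict (Ioi 0)).prod (volume.restrict (Ioc 0 φ))) := by
    refine (hG.mul_prod (integrableOn_const (C := (1 : ℝ)) measure_Ioc_lt_top.ne)).mono'
      (by fun_prop : Continuous _).aestronglyMeasurable ?_
    rw [Measure.prod_restrict]
    filter_upwards [ae_restrict_mem (measurableSet_Ioi.prod measurableSet_Ioc)] with p hp
    simpa [Function.uncurry] using hbound p.1 hp.1 p.2 (Ioc_subset_Icc_self hp.2)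
  have hhoriz (s : ℝ) (hs : s ∈ Ioc 0 φ) :
      ∫ θ in Ioi (0 : ℝ), deriv f (θ + s * I) * I = -f (s * I) * I := by
    refine (integral_mul_const _ _).trans (congrArg (· * I) (integral_Ioi_deriv_ofReal_add hf _
      (hG.mono' ?_ ?_) (hlim s (Ioc_subset_Icc_self hs))))
    · exact (by fun_prop : Continuous _).aestronglyMeasurable
    · filter_upwards [ae_restrict_mem measurableSet_Ioi] with θ hθ
      exact hbound θ hθ s (Ioc_subset_Icc_self hs)
  calc ∫ θ in Ioi (0 : ℝ), (f (θ + φ * I) - f θ)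
      = ∫ θ in Ioi (0 : ℝ), ∫ s in Ioc (0 : ℝ) φ, deriv f (θ + s * I) * I := by
        simp_rw [integral_Ioc_deriv_add_mul_I hf _ hφ]
    _ = ∫ s in Ioc (0 : ℝ) φ, ∫ θ in Ioi (0 : ℝ), deriv f (θ + s * I) * I :=
        integral_integral_swap hprod
    _ = ∫ s in Ioc (0 : ℝ) φ, -f (s * I) * I := setIntegral_congr_fun measurableSet_Ioc hhoriz
    _ = -I * ∫ s in 0..φ, f (s * I) := by
        rw [intervalIntegral.integral_of_le hφ, integral_mul_const, integral_neg]; ring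

lemma integrableOn_exp_neg_mul_cosh_mul_cosh_add_mul_I {z s : ℝ} (hzs : 0 < z * cos s) :
    IntegrableOn (fun θ : ℝ =>
      Complex.exp (-z * Complex.cosh (θ + s * I)) * Complex.cosh (θ + s * I)) (Ioi 0) := by
  refine (integrableOn_cosh_mul_exp_neg_mul_cosh hzs).mono' (by fun_prop)
    (ae_of_all _ fun θ => ?_)
  rw [norm_mul, Complex.norm_exp_neg_mul_cosh_add_mul_I, mul_comm]
  gcongr
  simpa using Complex.norm_cosh_le (θ + s * I)

theorem re_integral_exp_neg_mul_cosh_mul_cosh_add_mul_I {z φ : ℝ} (hz : 0 < z) (hφ₀ : 0 ≤ φ)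
    (hφ : φ < π / 2) :
    (∫ θ in Ioi (0 : ℝ),
        Complex.exp (-z * Complex.cosh (θ + φ * I)) * Complex.cosh (θ + φ * I)).re =
      (∫ θ in Ioi (0 : ℝ), Complex.exp (-z * Complex.cosh θ) * Complex.cosh θ).re := by
  set g : ℂ → ℂ := fun w => Complex.exp (-z * Complex.cosh w) * Complex.cosh w
  have hg' (w : ℂ) := Complex.hasDerivAt_exp_neg_mul_cosh_mul_cosh z w
  have hφπ : φ ≤ π := by linarith [pi_pos]
  have hc : 0 < z * cos φ := mul_pos hz (cos_pos_of_mem_Ioo ⟨by linarith, hφ⟩)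
  have hg_le (θ : ℝ) {s : ℝ} (hs : s ∈ Icc 0 φ) :
      ‖g (θ + s * I)‖ ≤ cosh θ * exp (-(z * cos φ * cosh θ)) := by
    rw [norm_mul, mul_comm]
    gcongr
    · simpa using Complex.norm_cosh_le (θ + s * I)
    · exact Complex.norm_exp_neg_mul_cosh_add_mul_I_le hz.le hφπ hs θ
  have hg'_le (θ : ℝ) {s : ℝ} (hs : s ∈ Icc 0 φ) :
      ‖deriv g (θ + s * I)‖ ≤ (1 + z) * (cosh θ ^ 2 * exp (-(z * cos φ * cosh θ))) := by
    have hsinh := Complex.norm_sinh_sub_mul_sinh_mul_cosh_le hz.le (θ + s * I)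
    simp only [Complex.add_re, Complex.ofReal_re, Complex.re_ofReal_mul, Complex.I_re, mul_zero,
      add_zero] at hsinh
    rw [(hg' _).deriv, norm_mul]
    calc _ ≤ exp (-(z * cos φ * cosh θ)) * ((1 + z) * cosh θ ^ 2) :=
          mul_le_mul (Complex.norm_exp_neg_mul_cosh_add_mul_I_le hz.le hφπ hs θ) hsinh
            (norm_nonneg _) (exp_pos _).le
      _ = _ := by ring
  have hg : Differentiable ℂ g := fun w => (hg' w).differentiableAt
  have hshift := integral_Ioi_sub_eq_neg_I_mul_intervalIntegral hg hφ₀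
    ((integrableOn_cosh_pow_mul_exp_neg_mul_cosh 2 hc).const_mul (1 + z))
    (fun θ _ s hs => hg'_le θ hs)
    (fun s hs => squeeze_zero_norm (fun θ => hg_le θ hs) (tendsto_cosh_mul_exp_neg_mul_cosh hc))
  have hvert :
      ∫ s in 0..φ, g (s * I) = ((∫ s in 0..φ, exp (-(z * cos s)) * cos s : ℝ) : ℂ) := by
    rw [← intervalIntegral.integral_ofReal]
    simp [g, Complex.cosh_mul_I]
  have hintφ : IntegrableOn (fun θ : ℝ => g (θ + φ * I)) (Ioi 0) :=
    integrableOn_exp_neg_mul_cosh_mul_cosh_add_mul_I hc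
  have hint₀ : IntegrableOn (fun θ : ℝ => g θ) (Ioi 0) := by
    simpa [g] using
      integrableOn_exp_neg_mul_cosh_mul_cosh_add_mul_I (s := 0) (by simpa using hz)
  rw [hvert, integral_sub hintφ hint₀] at hshift
  simpa [g, Complex.I_mul_re, sub_eq_zero] using congrArg Complex.re hshift

theorem integral_re_exp_neg_mul_cosh_mul_cosh_add_mul_I {z φ : ℝ} (hz : 0 < z) (hφ₀ : 0 ≤ φ)
    (hφ : φ < π / 2) :
    ∫ θ in Ioi (0 : ℝ), (cos φ * cosh θ * cos (z * sin φ * sinh θ) +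
        sin φ * sinh θ * sin (z * sin φ * sinh θ)) * exp (-(z * cos φ * cosh θ)) = K1 z := by
  have hc : 0 < z * cos φ := mul_pos hz (cos_pos_of_mem_Ioo ⟨by linarith [pi_pos], hφ⟩)
  have hφre := integral_re (integrableOn_exp_neg_mul_cosh_mul_cosh_add_mul_I hc)
  have h0re := integral_re (by simpa using
    integrableOn_exp_neg_mul_cosh_mul_cosh_add_mul_I (s := 0) (by simpa using hz) :
    IntegrableOn (fun θ : ℝ => Complex.exp (-z * Complex.cosh θ) * Complex.cosh θ) (Ioi 0))
  have hre₀ (θ : ℝ) : (Complex.exp (-z * Complex.cosh θ) * Complex.cosh θ).re =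
      cosh θ * exp (-(z * cosh θ)) := by
    simpa using Complex.re_exp_neg_mul_cosh_mul_cosh_add_mul_I z θ 0
  simp only [RCLike.re_to_complex, Complex.re_exp_neg_mul_cosh_mul_cosh_add_mul_I, hre₀]
    at hφre h0re
  rw [hφre, re_integral_exp_neg_mul_cosh_mul_cosh_add_mul_I hz hφ₀ hφ, ← h0re,
    K1_eq_integral_cosh_mul_exp_neg_mul_cosh hz]

lemma integrableOn_cosh_mul_cos_mul_exp_neg_mul_cosh {a : ℝ} (ha : 0 < a) (b : ℝ) :
    IntegrableOn (fun θ => cosh θ * cos (b * sinh θ) * exp (-(a * cosh θ))) (Ioi 0) := by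
  refine (integrableOn_cosh_mul_exp_neg_mul_cosh ha).mono' (by fun_prop)
    (ae_of_all _ fun θ => ?_)
  rw [norm_mul, norm_mul, norm_of_nonneg (cosh_pos θ).le, norm_of_nonneg (exp_pos _).le]
  gcongr
  exact mul_le_of_le_one_right (cosh_pos θ).le (abs_cos_le_one _)

lemma integrableOn_sinh_mul_sin_mul_exp_neg_mul_cosh {a : ℝ} (ha : 0 < a) (b : ℝ) :
    IntegrableOn (fun θ => sinh θ * sin (b * sinh θ) * exp (-(a * cosh θ))) (Ioi 0) := by
  refine (integrableOn_cosh_mul_exp_neg_mul_cosh ha).mono' (by fun_prop)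
    (ae_of_all _ fun θ => ?_)
  rw [norm_mul, norm_mul, norm_of_nonneg (exp_pos _).le, norm_eq_abs, norm_eq_abs]
  gcongr
  exact (mul_le_of_le_one_right (abs_nonneg _) (abs_sin_le_one _)).trans (abs_sinh_le_cosh θ)

theorem mul_integral_sinh_mul_sin_mul_exp_neg_mul_cosh {a : ℝ} (ha : 0 < a) (b : ℝ) :
    a * ∫ θ in Ioi (0 : ℝ), sinh θ * sin (b * sinh θ) * exp (-(a * cosh θ)) =
      b * ∫ θ in Ioi (0 : ℝ), cosh θ * cos (b * sinh θ) * exp (-(a * cosh θ)) := by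
  have hderiv (θ : ℝ) : HasDerivAt (fun θ => sin (b * sinh θ) * exp (-(a * cosh θ)))
      (b * (cosh θ * cos (b * sinh θ) * exp (-(a * cosh θ))) -
        a * (sinh θ * sin (b * sinh θ) * exp (-(a * cosh θ)))) θ := by
    refine (((hasDerivAt_sinh θ).const_mul b).sin.mul
      ((hasDerivAt_cosh θ).const_mul a).neg.exp).congr_deriv ?_
    simp only [Pi.neg_apply]; ring
  have hC := (integrableOn_cosh_mul_cos_mul_exp_neg_mul_cosh ha b).const_mul b
  have hS := (integrableOn_sinh_mul_sin_mul_exp_neg_mul_cosh ha b).const_mul a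
  have hlim : Tendsto (fun θ => sin (b * sinh θ) * exp (-(a * cosh θ))) atTop (𝓝 0) := by
    refine squeeze_zero_norm (fun θ => ?_) (tendsto_cosh_mul_exp_neg_mul_cosh ha)
    rw [norm_mul, norm_of_nonneg (exp_pos _).le]
    gcongr
    exact (abs_sin_le_one _).trans (one_le_cosh θ)
  have hIBP := integral_Ioi_of_hasDerivAt_of_tendsto (by fun_prop) (fun θ _ => hderiv θ)
    (hC.sub hS) hlim
  rw [integral_sub hC hS, integral_const_mul, integral_const_mul] at hIBP
  simp only [sinh_zero, mul_zero, sin_zero, zero_mul, sub_zero, sub_eq_zero] at hIBP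
  exact hIBP.symm

theorem integral_cosh_mul_cos_mul_exp_neg_mul_cosh {a : ℝ} (ha : 0 < a) (b : ℝ) :
    ∫ θ in Ioi (0 : ℝ), cosh θ * cos (b * sinh θ) * exp (-(a * cosh θ)) =
      a / √(a ^ 2 + b ^ 2) * K1 √(a ^ 2 + b ^ 2) := by
  wlog hb : 0 ≤ b generalizing b
  · have hcos (θ : ℝ) : cos (|b| * sinh θ) = cos (b * sinh θ) := by
      rcases abs_choice b with h | h <;> simp [h]
    simpa only [hcos, sq_abs] using this |b| (abs_nonneg b)
  set z := √(a ^ 2 + b ^ 2)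
  have hz : 0 < z := sqrt_pos.2 (by positivity)
  set φ := Complex.arg (a + b * I)
  have hnorm : ‖(a + b * I : ℂ)‖ = z := Complex.norm_add_mul_I a b
  have hzc : z * cos φ = a := by simpa [hnorm] using Complex.norm_mul_cos_arg (a + b * I)
  have hzs : z * sin φ = b := by simpa [hnorm] using Complex.norm_mul_sin_arg (a + b * I)
  have hφ₀ : 0 ≤ φ := Complex.arg_nonneg_iff.2 (by simpa using hb)
  have hφ : φ < π / 2 := Complex.arg_lt_pi_div_two_iff.2 (Or.inl (by simpa using ha))
  have hshift := integral_re_exp_neg_mul_cosh_mul_cosh_add_mul_I hz hφ₀ hφ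
  simp only [hzc, hzs] at hshift
  have hC := integrableOn_cosh_mul_cos_mul_exp_neg_mul_cosh ha b
  have hS := integrableOn_sinh_mul_sin_mul_exp_neg_mul_cosh ha b
  rw [show (fun θ => (cos φ * cosh θ * cos (b * sinh θ) + sin φ * sinh θ * sin (b * sinh θ)) *
        exp (-(a * cosh θ))) =
      fun θ => cos φ * (cosh θ * cos (b * sinh θ) * exp (-(a * cosh θ))) +
        sin φ * (sinh θ * sin (b * sinh θ) * exp (-(a * cosh θ))) by ext; ring,
    integral_add (hC.const_mul _) (hS.const_mul _), integral_const_mul, integral_const_mul]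
    at hshift
  have hIBP := mul_integral_sinh_mul_sin_mul_exp_neg_mul_cosh ha b
  set C := ∫ θ in Ioi (0 : ℝ), cosh θ * cos (b * sinh θ) * exp (-(a * cosh θ))
  set S := ∫ θ in Ioi (0 : ℝ), sinh θ * sin (b * sinh θ) * exp (-(a * cosh θ))
  have hz2 : z ^ 2 = a ^ 2 + b ^ 2 := sq_sqrt (by positivity)
  rw [div_mul_eq_mul_div, eq_div_iff hz.ne']
  apply mul_left_cancel₀ hz.ne'
  linear_combination (a * z) * hshift - a * C * hzc - a * S * hzs + C * hz2 - b * hIBP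

theorem stmt1 (r1 r2 : ℝ) (hr1 : 0 ≤ r1) (hr2 : 0 ≤ r2) (hne : (r1, r2) ≠ (0, 0)) :
    (r1 + r2)/Real.sqrt (r1^2 + r2^2) * K1 (Real.sqrt (r1^2 + r2^2)) =
      ∫ u in Set.Ioi (1:ℝ),
        Real.sqrt 2 * u / Real.sqrt (u^2 - 1) * Real.exp (-((r1 + r2)/Real.sqrt 2) * u) *
          Real.cos ((r1 - r2)/Real.sqrt 2 * Real.sqrt (u^2 - 1)) := by
  have hsum : 0 < r1 + r2 :=
    (add_nonneg hr1 hr2).lt_of_ne fun h => hne (Prod.ext (by simp; linarith) (by simp; linarith))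
  have h2 : √2 ^ 2 = 2 := sq_sqrt zero_le_two
  set a := (r1 + r2) / √2
  set b := (r1 - r2) / √2
  have ha : 0 < a := by positivity
  have hab : a ^ 2 + b ^ 2 = r1 ^ 2 + r2 ^ 2 := by
    simp only [a, b, div_pow, h2]; ring
  have hsubst :
      ∫ u in Ioi (1 : ℝ), √2 * u / √(u ^ 2 - 1) * exp (-a * u) * cos (b * √(u ^ 2 - 1)) =
        √2 * ∫ θ in Ioi (0 : ℝ), cosh θ * cos (b * sinh θ) * exp (-(a * cosh θ)) := by
    rw [integral_Ioi_one_eq_integral_sinh_mul_comp_cosh, ← integral_const_mul]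
    refine setIntegral_congr_fun measurableSet_Ioi fun θ hθ => ?_
    have hsinh := sinh_pos_iff.2 hθ
    rw [cosh_sq, add_sub_cancel_right, sqrt_sq hsinh.le]
    field_simp
  rw [hsubst, integral_cosh_mul_cos_mul_exp_neg_mul_cosh ha, hab, ← mul_assoc, ← mul_div_assoc,
    mul_div_cancel₀ _ (sqrt_pos.2 two_pos).ne']

end
end

section
/- Let 0 < a < 1 and define P(z, w) = −2 − 2a² − a/w − a·w − a/z − a·z for nonzero complex z, w. Then P(z, w) ≠ 0 for all z, w ∈ ℂ with |z| = |w| = 1. -/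
/-! On the unit torus `1/z = conj z` and `1/w = conj w`, so `P(z, w) = -2 (1 + a² + a (Re z + Re w))`
is real, and since `Re z, Re w ≥ -1` it is at most `-2 (1 - a)² < 0`. -/

theorem Complex.inv_add_self_of_norm_eq_one {w : ℂ} (hw : ‖w‖ = 1) : w⁻¹ + w = 2 * (w.re : ℂ) := by
  rw [Complex.inv_eq_conj hw, add_comm, Complex.add_conj]
  push_cast
  ring

theorem Complex.neg_one_le_re_of_norm_eq_one {w : ℂ} (hw : ‖w‖ = 1) : -1 ≤ w.re :=
  (abs_le.mp (hw ▸ Complex.abs_re_le_norm w)).1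

theorem one_add_sq_add_mul_add_pos {a x y : ℝ} (ha0 : 0 ≤ a) (ha1 : a ≠ 1) (hx : -1 ≤ x)
    (hy : -1 ≤ y) : 0 < 1 + a ^ 2 + a * (x + y) :=
  calc 0 < (1 - a) ^ 2 := sq_pos_of_ne_zero (sub_ne_zero.mpr ha1.symm)
    _ ≤ 1 + a ^ 2 + a * (x + y) := by nlinarith [mul_nonneg ha0 (by linarith : 0 ≤ x + y + 2)]

theorem stmt6 (a : ℝ) (ha0 : 0 < a) (ha1 : a < 1) (z w : ℂ)
    (hz : ‖z‖ = 1) (hw : ‖w‖ = 1) :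
    (-2 - 2*(a:ℂ)^2 - (a:ℂ)/w - (a:ℂ)*w - (a:ℂ)/z - (a:ℂ)*z) ≠ 0 := by
  have hP : -2 - 2*(a:ℂ)^2 - (a:ℂ)/w - (a:ℂ)*w - (a:ℂ)/z - (a:ℂ)*z
      = ((-2 * (1 + a ^ 2 + a * (z.re + w.re)) : ℝ) : ℂ) := by
    push_cast
    linear_combination (-(a:ℂ)) * Complex.inv_add_self_of_norm_eq_one hz
      - (a:ℂ) * Complex.inv_add_self_of_norm_eq_one hw
  rw [hP, Ne, Complex.ofReal_eq_zero]
  have hpos := one_add_sq_add_mul_add_pos ha0.le ha1.ne (Complex.neg_one_le_re_of_norm_eq_one hz)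
    (Complex.neg_one_le_re_of_norm_eq_one hw)
  linarith
end

section
/- Let 0 < c < 1/2. The map J(u) = √(c/2)·(u − 1/u) is an analytic bijection from the punctured open unit disc 𝔻* = {u ∈ ℂ : 0 < |u| < 1} onto ℂ ∖ i[−√(2c), √(2c)], with inverse G; that is, for every w ∈ ℂ ∖ i[−√(2c), √(2c)] one has G(w) ∈ 𝔻* and J(G(w)) = w, and for every u ∈ 𝔻* one has G(J(u)) = u. -/
noncomputable section

/-- Principal-branch complex square root. -/
def csqrt (z : ℂ) : ℂ := z ^ ((1:ℂ)/2)

/-- The branch of `√(w² + 2c)` defined by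
`√(w² + 2c) := i·√(−√(2c) − i w)·√(√(2c) − i w)` with principal-branch square roots. -/
def sqrtc (c : ℝ) (w : ℂ) : ℂ :=
  Complex.I * csqrt (-(Real.sqrt (2*c) : ℂ) - Complex.I * w) *
    csqrt ((Real.sqrt (2*c) : ℂ) - Complex.I * w)

/-- `G(w) = (1/√(2c))·(w − √(w² + 2c))`. -/
def Gfun (c : ℝ) (w : ℂ) : ℂ := ((Real.sqrt (2*c) : ℂ))⁻¹ * (w - sqrtc c w)

/-- `J(u) = √(c/2)·(u − 1/u)`. -/
def Jfun (c : ℝ) (u : ℂ) : ℂ := (Real.sqrt (c/2) : ℂ) * (u - 1/u)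

/-- The punctured open unit disc `𝔻* = {u ∈ ℂ : 0 < |u| < 1}`. -/
def punctDisc : Set ℂ := {u : ℂ | 0 < ‖u‖ ∧ ‖u‖ < 1}

/-- The vertical segment `i[−√(2c), √(2c)] = {i y : −√(2c) ≤ y ≤ √(2c)}`. -/
def slit (c : ℝ) : Set ℂ :=
  {z : ℂ | ∃ y : ℝ, -Real.sqrt (2*c) ≤ y ∧ y ≤ Real.sqrt (2*c) ∧ z = Complex.I * y}

/-!
Put `a = √(2c)` and `S = √(w² + 2c)`. Since `(w - S)(w + S) = -a²`, the numbers `G(w) = (w - S)/a`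
and `-(w + S)/a` are reciprocal, so `J(G(w)) = w` for every `w`. Off the slit the branch satisfies
`Re(w·S̄) > 0`: with `p = -a - iw`, `q = a - iw` we have `S = i√p√q` and `w = i(p + q)/2`, so
`Re(w·S̄) = (|p| + |q|)/2 · Re(√p·conj √q)`, and the principal roots of `p` and `q` (which have the
same imaginary part and are not separated by the cut `(-∞, 0]`) make an acute angle. Hence
`|w - S| < |w + S|`, and with `|w - S|·|w + S| = a²` this gives `|G(w)| < 1`.

`Re J(u) = 0` forces `u ∈ iℝ` on `𝔻*`, and there `|Im J(u)| = (a/2)(|u| + 1/|u|) > a`,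
so `J` misses the slit; `J` is injective on `𝔻*` because `J(u) = J(v)` forces `v = u` or `uv = -1`.
-/

open Complex ComplexConjugate

lemma csqrt_sq (z : ℂ) : csqrt z ^ 2 = z := by
  rw [csqrt, one_div]
  exact_mod_cast cpow_nat_inv_pow z two_ne_zero

lemma csqrt_eq_exp {z : ℂ} (hz : z ≠ 0) : csqrt z = exp (log z / 2) := by
  rw [csqrt, cpow_def_of_ne_zero hz, mul_one_div]

lemma re_csqrt_mul_conj_csqrt_pos {p q : ℂ} (hp : p ≠ 0) (hq : q ≠ 0)
    (harg : |arg p - arg q| < Real.pi) : 0 < (csqrt p * conj (csqrt q)).re := by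
  rw [csqrt_eq_exp hp, csqrt_eq_exp hq, ← exp_conj, ← exp_add, exp_re]
  refine mul_pos (Real.exp_pos _) (Real.cos_pos_of_mem_Ioo ?_)
  have him : (log p / 2 + conj (log q / 2)).im = (arg p - arg q) / 2 := by
    simp only [map_div₀, map_ofNat, add_im, div_ofNat_im, conj_im, log_im]; ring
  rw [him]
  constructor <;> linarith [abs_lt.1 harg]

lemma abs_arg_sub_arg_lt_pi {p q : ℂ} (him : p.im = q.im) (h : p.im ≠ 0 ∨ 0 < p.re * q.re) :
    |arg p - arg q| < Real.pi := by
  rcases lt_trichotomy p.im 0 with hneg | hzero | hpos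
  · have hp := arg_neg_iff.2 hneg
    have hq := arg_neg_iff.2 (him ▸ hneg)
    rw [abs_lt]; constructor <;> linarith [neg_pi_lt_arg p, neg_pi_lt_arg q]
  · rcases pos_and_pos_or_neg_and_neg_of_mul_pos (h.resolve_left (not_not.2 hzero))
      with ⟨hp, hq⟩ | ⟨hp, hq⟩
    · rw [arg_eq_zero_iff.2 ⟨hp.le, hzero⟩, arg_eq_zero_iff.2 ⟨hq.le, him ▸ hzero⟩]
      simpa using Real.pi_pos
    · rw [arg_eq_pi_iff.2 ⟨hp, hzero⟩, arg_eq_pi_iff.2 ⟨hq, him ▸ hzero⟩]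
      simpa using Real.pi_pos
  · have hp : 0 < arg p := (arg_nonneg_iff.2 hpos.le).lt_of_ne'
      fun h => hpos.ne' (arg_eq_zero_iff.1 h).2
    have hq : 0 < arg q := (arg_nonneg_iff.2 (him ▸ hpos).le).lt_of_ne'
      fun h => (him ▸ hpos).ne' (arg_eq_zero_iff.1 h).2
    rw [abs_lt]; constructor <;> linarith [arg_le_pi p, arg_le_pi q]

lemma re_mul_conj_of_sq_add_sq (α β : ℂ) :
    (I * (α ^ 2 + β ^ 2) / 2 * conj (I * α * β)).re =
      (normSq α + normSq β) / 2 * (α * conj β).re := by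
  simp only [map_mul, conj_I, mul_re, mul_im, conj_re, conj_im, div_ofNat_re, div_ofNat_im,
    add_re, add_im, pow_two, I_re, I_im, neg_re, neg_im, normSq_apply]
  ring

lemma norm_sub_lt_norm_add_of_re_mul_conj_pos {z w : ℂ} (h : 0 < (z * conj w).re) :
    ‖z - w‖ < ‖z + w‖ := by
  refine lt_of_pow_lt_pow_left₀ 2 (norm_nonneg _) ?_
  rw [Complex.sq_norm, Complex.sq_norm, normSq_sub, normSq_add]
  linarith

lemma two_lt_add_inv {r : ℝ} (h0 : 0 < r) (h1 : r < 1) : 2 < r + r⁻¹ := by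
  have hsq : 2 * r < r * r + 1 := by nlinarith
  calc 2 = 2 * r * r⁻¹ := by field_simp
    _ < (r * r + 1) * r⁻¹ := by gcongr
    _ = r + r⁻¹ := by field_simp

lemma re_sub_inv (u : ℂ) : (u - u⁻¹).re = u.re * (1 - (normSq u)⁻¹) := by
  rw [sub_re, inv_re]; ring

lemma abs_add_inv (t : ℝ) : |t + t⁻¹| = |t| + |t|⁻¹ := by
  rw [← abs_inv, abs_add_eq_add_abs_iff]
  rcases le_total 0 t with h | h
  · exact Or.inl ⟨h, inv_nonneg.2 h⟩
  · exact Or.inr ⟨h, inv_nonpos.2 h⟩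

lemma two_lt_abs_im_sub_inv {u : ℂ} (hre : u.re = 0) (h0 : 0 < ‖u‖) (h1 : ‖u‖ < 1) :
    2 < |(u - u⁻¹).im| := by
  have hnorm : ‖u‖ = |u.im| := by
    rw [norm_def, normSq_apply, hre, zero_mul, zero_add, Real.sqrt_mul_self_eq_abs]
  have him : (u - u⁻¹).im = u.im + (u.im)⁻¹ := by
    have : u.im ≠ 0 := abs_pos.1 (hnorm ▸ h0)
    rw [sub_im, inv_im, normSq_apply, hre]
    field_simp
    ring
  rw [him, abs_add_inv, ← hnorm]
  exact two_lt_add_inv h0 h1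

lemma sqrt_half_eq (c : ℝ) : √(c / 2) = √(2 * c) / 2 := by
  rw [show c / 2 = 2 * c / 2 ^ 2 by ring, Real.sqrt_div' _ (by positivity),
    Real.sqrt_sq zero_le_two]

lemma sq_sqrtc {c : ℝ} (hc : 0 ≤ c) (w : ℂ) : sqrtc c w ^ 2 = w ^ 2 + 2 * c := by
  have ha : ((√(2 * c) : ℝ) : ℂ) ^ 2 = 2 * c := by
    rw [← ofReal_pow, Real.sq_sqrt (by positivity)]; push_cast; ring
  rw [sqrtc, mul_pow, mul_pow, csqrt_sq, csqrt_sq]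
  linear_combination ha + ((I ^ 2 - 1) * w ^ 2 - ((√(2 * c) : ℝ) : ℂ) ^ 2) * I_sq

lemma re_ne_zero_or_sqrt_lt_abs_im_of_notMem_slit {c : ℝ} {w : ℂ} (hw : w ∉ slit c) :
    w.re ≠ 0 ∨ √(2 * c) < |w.im| := by
  by_contra! h
  obtain ⟨hre, him⟩ := h
  exact hw ⟨w.im, (abs_le.1 him).1, (abs_le.1 him).2, Complex.ext (by simp [hre]) (by simp)⟩

lemma re_mul_conj_sqrtc_pos {c : ℝ} {w : ℂ} (hw : w ∉ slit c) :
    0 < (w * conj (sqrtc c w)).re := by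
  set a : ℂ := ↑(√(2 * c))
  set p := -a - I * w
  set q := a - I * w
  have hw_eq : w = I * (csqrt p ^ 2 + csqrt q ^ 2) / 2 := by
    rw [csqrt_sq, csqrt_sq]; linear_combination w * I_sq
  have hcase : p.im ≠ 0 ∨ 0 < p.re * q.re := by
    have hpq : p.re * q.re = w.im ^ 2 - √(2 * c) ^ 2 := by simp [p, q, a]; ring
    rcases re_ne_zero_or_sqrt_lt_abs_im_of_notMem_slit hw with h | h
    · left; simpa [p, a] using h
    · right; rw [hpq, sub_pos, ← sq_abs w.im]
      exact pow_lt_pow_left₀ h (Real.sqrt_nonneg _) two_ne_zero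
  have him : p.im = q.im := by simp [p, q, a]
  have hp : p ≠ 0 := fun h => by simp [h] at hcase
  have hq : q ≠ 0 := fun h => by rw [him] at hcase; simp [h] at hcase
  have hdot := re_csqrt_mul_conj_csqrt_pos hp hq (abs_arg_sub_arg_lt_pi him hcase)
  have key := re_mul_conj_of_sq_add_sq (csqrt p) (csqrt q)
  rw [← hw_eq] at key
  rw [sqrtc, key]
  have hα : 0 < normSq (csqrt p) := normSq_pos.2 fun h => by simp [h] at hdot
  exact mul_pos (half_pos (add_pos_of_pos_of_nonneg hα (normSq_nonneg _))) hdot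

lemma sub_sqrtc_mul_add_sqrtc {c : ℝ} (hc : 0 ≤ c) (w : ℂ) :
    (w - sqrtc c w) * (w + sqrtc c w) = -(2 * c) := by
  linear_combination -sq_sqrtc hc w

lemma Jfun_Gfun {c : ℝ} (hc : 0 < c) (w : ℂ) : Jfun c (Gfun c w) = w := by
  have ha : (↑(√(2 * c)) : ℂ) ≠ 0 := ofReal_ne_zero.2 (Real.sqrt_pos.2 (by positivity)).ne'
  have ha2 : (↑(√(2 * c)) : ℂ) ^ 2 = 2 * c := by
    rw [← ofReal_pow, Real.sq_sqrt (by positivity)]; push_cast; ring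
  have hprod := sub_sqrtc_mul_add_sqrtc hc.le w
  have hm : w - sqrtc c w ≠ 0 := fun h => by
    rw [h, zero_mul, eq_comm, neg_eq_zero] at hprod
    exact two_ne_zero (mul_eq_zero.1 hprod |>.resolve_right (ofReal_ne_zero.2 hc.ne'))
  rw [Jfun, Gfun, sqrt_half_eq, ofReal_div, ofReal_ofNat]
  field_simp
  linear_combination (-1 : ℂ) * hprod - ha2

lemma Gfun_mem_punctDisc {c : ℝ} (hc : 0 < c) {w : ℂ} (hw : w ∉ slit c) :
    Gfun c w ∈ punctDisc := by
  have ha : 0 < √(2 * c) := Real.sqrt_pos.2 (by positivity)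
  have hnorm : ‖w - sqrtc c w‖ * ‖w + sqrtc c w‖ = √(2 * c) ^ 2 := by
    rw [← norm_mul, sub_sqrtc_mul_add_sqrtc hc.le, Real.sq_sqrt (by positivity), norm_neg]
    exact_mod_cast Real.norm_of_nonneg (by positivity)
  have hlt := norm_sub_lt_norm_add_of_re_mul_conj_pos (re_mul_conj_sqrtc_pos hw)
  have hsub_pos : 0 < ‖w - sqrtc c w‖ := by
    refine norm_pos_iff.2 fun h => ?_
    rw [h, norm_zero, zero_mul] at hnorm
    exact ha.ne' (pow_eq_zero_iff two_ne_zero |>.1 hnorm.symm)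
  have hsub_lt : ‖w - sqrtc c w‖ < √(2 * c) := by nlinarith
  have hG : ‖Gfun c w‖ = ‖w - sqrtc c w‖ / √(2 * c) := by
    rw [Gfun, norm_mul, norm_inv, norm_real, Real.norm_of_nonneg ha.le, inv_mul_eq_div]
  exact ⟨hG ▸ div_pos hsub_pos ha, hG ▸ (div_lt_one ha).2 hsub_lt⟩

lemma ne_zero_of_mem_punctDisc {u : ℂ} (hu : u ∈ punctDisc) : u ≠ 0 :=
  norm_pos_iff.1 hu.1

lemma Jfun_eq (c : ℝ) (u : ℂ) : Jfun c u = ↑(√(2 * c) / 2) * (u - u⁻¹) := by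
  rw [Jfun, sqrt_half_eq, one_div]

lemma Jfun_notMem_slit {c : ℝ} (hc : 0 < c) {u : ℂ} (hu : u ∈ punctDisc) :
    Jfun c u ∉ slit c := by
  rintro ⟨y, hy_lo, hy_hi, hy⟩
  have hk : 0 < √(2 * c) / 2 := half_pos (Real.sqrt_pos.2 (by positivity))
  rw [Jfun_eq] at hy
  have hre : √(2 * c) / 2 * (u - u⁻¹).re = 0 := by
    simpa only [re_ofReal_mul, I_mul_re, ofReal_im, neg_zero] using congrArg re hy
  have hnormSq : normSq u ≠ 1 := by
    rw [normSq_eq_norm_sq]; exact (pow_lt_one₀ (norm_nonneg _) hu.2 two_ne_zero).ne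
  have hu_re : u.re = 0 := by
    rw [re_sub_inv, mul_eq_zero_iff_left hk.ne'] at hre
    exact (mul_eq_zero.1 hre).resolve_right (sub_ne_zero.2 fun h => hnormSq (inv_eq_one.1 h.symm))
  have him : √(2 * c) / 2 * (u - u⁻¹).im = y := by
    simpa only [im_ofReal_mul, I_mul_im, ofReal_re] using congrArg im hy
  have hlarge := two_lt_abs_im_sub_inv hu_re hu.1 hu.2
  have hy_abs : |y| ≤ √(2 * c) := abs_le.2 ⟨hy_lo, hy_hi⟩
  rw [← him, abs_mul, abs_of_pos hk] at hy_abs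
  nlinarith

lemma injOn_sub_inv : Set.InjOn (fun u : ℂ => u - u⁻¹) punctDisc := by
  intro u hu v hv h
  simp only at h
  have hu0 := ne_zero_of_mem_punctDisc hu
  have hv0 := ne_zero_of_mem_punctDisc hv
  have hfac : (u - v) * (u * v + 1) = 0 := by
    field_simp at h
    linear_combination h
  refine sub_eq_zero.1 ((mul_eq_zero.1 hfac).resolve_right fun h1 => ?_)
  have : ‖u * v‖ = 1 := by rw [eq_neg_of_add_eq_zero_left h1, norm_neg, norm_one]
  rw [norm_mul] at this
  nlinarith [hu.1, hu.2, hv.1, hv.2]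

lemma injOn_Jfun {c : ℝ} (hc : 0 < c) : Set.InjOn (Jfun c) punctDisc := by
  intro u hu v hv h
  have hk : ((√(2 * c) / 2 : ℝ) : ℂ) ≠ 0 :=
    ofReal_ne_zero.2 (half_pos (Real.sqrt_pos.2 (by positivity))).ne'
  rw [Jfun_eq, Jfun_eq] at h
  exact injOn_sub_inv hu hv (mul_left_cancel₀ hk h)

lemma analyticOn_Jfun (c : ℝ) : AnalyticOn ℂ (Jfun c) punctDisc := fun _ hu =>
  (analyticAt_const.mul (analyticAt_id.sub
    (analyticAt_const.div analyticAt_id (ne_zero_of_mem_punctDisc hu)))).analyticWithinAt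

theorem stmt7_general (c : ℝ) (hc0 : 0 < c) :
    AnalyticOn ℂ (Jfun c) punctDisc ∧
    (∀ u ∈ punctDisc, Jfun c u ∈ (slit c)ᶜ) ∧
    (∀ w ∈ (slit c)ᶜ, Gfun c w ∈ punctDisc ∧ Jfun c (Gfun c w) = w) ∧
    (∀ u ∈ punctDisc, Gfun c (Jfun c u) = u) := by
  refine ⟨analyticOn_Jfun c, fun u hu => Jfun_notMem_slit hc0 hu,
    fun w hw => ⟨Gfun_mem_punctDisc hc0 hw, Jfun_Gfun hc0 w⟩, fun u hu => ?_⟩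
  have hGJ : Gfun c (Jfun c u) ∈ punctDisc := Gfun_mem_punctDisc hc0 (Jfun_notMem_slit hc0 hu)
  exact injOn_Jfun hc0 hGJ hu (Jfun_Gfun hc0 _)

theorem stmt7 (c : ℝ) (hc0 : 0 < c) (hc : c < 1/2) :
    AnalyticOn ℂ (Jfun c) punctDisc ∧
    (∀ u ∈ punctDisc, Jfun c u ∈ (slit c)ᶜ) ∧
    (∀ w ∈ (slit c)ᶜ, Gfun c w ∈ punctDisc ∧ Jfun c (Gfun c w) = w) ∧
    (∀ u ∈ punctDisc, Gfun c (Jfun c u) = u) :=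
  stmt7_general c hc0

end
end

section
/- Let ε > 0, let ε₁, ε₂ ∈ {0, 1}, and let α₀, β₀, α₁, β₁ be real numbers with (αₘ/ε, βₘ/ε) ∈ (2ℤ)² for m ∈ {0, 1} and (α₀, β₀) ≠ (α₁, β₁). For i ≠ j in {0, 1}, write x(j) = (x₁(j), x₂(j)) = (1 + αⱼ/ε)·(1,1) + (βⱼ/ε)·(−1,1) + (0, 2ε₁ − 1) and y(i) = (y₁(i), y₂(i)) = (1 + αᵢ/ε)·(1,1) + (βᵢ/ε)·(−1,1) + (2ε₂ − 1, 0), and set α = αⱼ − αᵢ, β = βⱼ − βᵢ. Define k₁ = (x₂(j) − y₂(i) − 1)/2 + h(ε₁, ε₂), ℓ₁ = (y₁(i) − x₁(j) − 1)/2, k₂ = k₁ + 1 − 2h(ε₁, ε₂), ℓ₂ = ℓ₁ + 1. Then |k₁| = |α + β|/(2ε) + σ₁(2ε₁ − 1)(1 − ε₂), |ℓ₁| = |α − β|/(2ε) + σ₂(1 − ε₂), |k₂| = |α + β|/(2ε) + σ₁ ε₂ (2ε₁ − 1), and |ℓ₂| = |α − β|/(2ε) − σ₂ ε₂. -/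
/-- Coordinates of dimers in the two-periodic dimer model and the parameters
`k₁, ℓ₁, k₂, ℓ₂` in the single-integral formula for the inverse Kasteleyn matrix:
`|k₁| = |α+β|/(2ε) + σ₁(2ε₁−1)(1−ε₂)` etc. -/
theorem stmt11 (ε : ℝ) (hε : 0 < ε) (ε₁ ε₂ : ℤ)
    (hε₁ : ε₁ = 0 ∨ ε₁ = 1) (hε₂ : ε₂ = 0 ∨ ε₂ = 1)
    (αv βv : Fin 2 → ℝ)
    (heven : ∀ m : Fin 2, ∃ p q : ℤ, αv m / ε = 2*p ∧ βv m / ε = 2*q)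
    (hne : (αv 0, βv 0) ≠ (αv 1, βv 1))
    (i j : Fin 2) (hij : i ≠ j)
    (α β : ℝ) (hα : α = αv j - αv i) (hβ : β = βv j - βv i)
    (σ₁ σ₂ : ℤ)
    (hσ₁sign : α + β ≠ 0 → (σ₁ : ℝ) = Real.sign (α + β))
    (hσ₁deg : α + β = 0 → σ₁ = 2*ε₁ - 1)
    (hσ₂sign : α - β ≠ 0 → (σ₂ : ℝ) = Real.sign (α - β))
    (hσ₂deg : α - β = 0 → σ₂ = 1 - 2*ε₂)
    -- the planar coordinates x(j) = (x₁,x₂) ∈ W_{ε₁}, y(i) = (y₁,y₂) ∈ B_{ε₂}: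
    (x₁ x₂ y₁ y₂ : ℝ)
    (hx₁ : x₁ = (1 + αv j / ε) - βv j / ε)
    (hx₂ : x₂ = (1 + αv j / ε) + βv j / ε + (2*(ε₁ : ℝ) - 1))
    (hy₁ : y₁ = (1 + αv i / ε) - βv i / ε + (2*(ε₂ : ℝ) - 1))
    (hy₂ : y₂ = (1 + αv i / ε) + βv i / ε)
    (k₁ l₁ k₂ l₂ : ℝ)
    (hk₁ : k₁ = (x₂ - y₂ - 1)/2 + ((ε₁*(1-ε₂) + ε₂*(1-ε₁) : ℤ) : ℝ))
    (hl₁ : l₁ = (y₁ - x₁ - 1)/2)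
    (hk₂ : k₂ = k₁ + 1 - 2*((ε₁*(1-ε₂) + ε₂*(1-ε₁) : ℤ) : ℝ))
    (hl₂ : l₂ = l₁ + 1) :
    |k₁| = |α + β|/(2*ε) + ((σ₁*(2*ε₁-1)*(1-ε₂) : ℤ) : ℝ) ∧
    |l₁| = |α - β|/(2*ε) + ((σ₂*(1-ε₂) : ℤ) : ℝ) ∧
    |k₂| = |α + β|/(2*ε) + ((σ₁*ε₂*(2*ε₁-1) : ℤ) : ℝ) ∧
    |l₂| = |α - β|/(2*ε) - ((σ₂*ε₂ : ℤ) : ℝ) := by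
  obtain ⟨pi, qi, hai, hbi⟩ := heven i
  obtain ⟨pj, qj, haj, hbj⟩ := heven j
  have hεne : ε ≠ 0 := ne_of_gt hε
  have e1 : αv j = ε * (2*(pj:ℝ)) := by rw [← haj]; field_simp
  have e2 : αv i = ε * (2*(pi:ℝ)) := by rw [← hai]; field_simp
  have e3 : βv j = ε * (2*(qj:ℝ)) := by rw [← hbj]; field_simp
  have e4 : βv i = ε * (2*(qi:ℝ)) := by rw [← hbi]; field_simp
  have hAB : α + β = (2*ε) * (((pj - pi) + (qj - qi) : ℤ) : ℝ) := by
    rw [hα, hβ, e1, e2, e3, e4]; push_cast; ring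
  have hAB' : α - β = (2*ε) * (((pj - pi) - (qj - qi) : ℤ) : ℝ) := by
    rw [hα, hβ, e1, e2, e3, e4]; push_cast; ring
  have h2ε : (0:ℝ) < 2*ε := by linarith
  have habs1 : |α + β| / (2*ε) = ((|(pj - pi) + (qj - qi)| : ℤ) : ℝ) := by
    rw [hAB, abs_mul, abs_of_pos h2ε, mul_div_cancel_left₀ _ (ne_of_gt h2ε)]
    push_cast; ring
  have habs2 : |α - β| / (2*ε) = ((|(pj - pi) - (qj - qi)| : ℤ) : ℝ) := by
    rw [hAB', abs_mul, abs_of_pos h2ε, mul_div_cancel_left₀ _ (ne_of_gt h2ε)]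
    push_cast; ring
  -- sign facts for σ₁
  have hσ₁pos : 0 < (pj - pi) + (qj - qi) → σ₁ = 1 := by
    intro hS
    have hc : (0:ℝ) < (((pj - pi) + (qj - qi) : ℤ) : ℝ) := by exact_mod_cast hS
    have hpos : 0 < α + β := by rw [hAB]; exact mul_pos h2ε hc
    have h := hσ₁sign (ne_of_gt hpos)
    rw [Real.sign_of_pos hpos] at h
    exact_mod_cast h
  have hσ₁neg : (pj - pi) + (qj - qi) < 0 → σ₁ = -1 := by
    intro hS
    have hc : (((pj - pi) + (qj - qi) : ℤ) : ℝ) < 0 := by exact_mod_cast hS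
    have hneg : α + β < 0 := by rw [hAB]; exact mul_neg_of_pos_of_neg h2ε hc
    have h := hσ₁sign (ne_of_lt hneg)
    rw [Real.sign_of_neg hneg] at h
    exact_mod_cast h
  have hσ₁zero : (pj - pi) + (qj - qi) = 0 → σ₁ = 2*ε₁ - 1 := by
    intro hS
    apply hσ₁deg
    rw [hAB, hS]; simp
  have hσ₂pos : 0 < (pj - pi) - (qj - qi) → σ₂ = 1 := by
    intro hT
    have hc : (0:ℝ) < (((pj - pi) - (qj - qi) : ℤ) : ℝ) := by exact_mod_cast hT
    have hpos : 0 < α - β := by rw [hAB']; exact mul_pos h2ε hc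
    have h := hσ₂sign (ne_of_gt hpos)
    rw [Real.sign_of_pos hpos] at h
    exact_mod_cast h
  have hσ₂neg : (pj - pi) - (qj - qi) < 0 → σ₂ = -1 := by
    intro hT
    have hc : (((pj - pi) - (qj - qi) : ℤ) : ℝ) < 0 := by exact_mod_cast hT
    have hneg : α - β < 0 := by rw [hAB']; exact mul_neg_of_pos_of_neg h2ε hc
    have h := hσ₂sign (ne_of_lt hneg)
    rw [Real.sign_of_neg hneg] at h
    exact_mod_cast h
  have hσ₂zero : (pj - pi) - (qj - qi) = 0 → σ₂ = 1 - 2*ε₂ := by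
    intro hT
    apply hσ₂deg
    rw [hAB', hT]; simp
  -- express k₁, l₁, k₂, l₂ as integers
  have ek₁ : k₁ = ((((pj - pi) + (qj - qi)) + ε₁ - 1 + (ε₁*(1-ε₂) + ε₂*(1-ε₁)) : ℤ) : ℝ) := by
    rw [hk₁, hx₂, hy₂, e1, e2, e3, e4]
    field_simp
    push_cast
    ring
  have el₁ : l₁ = ((-((pj - pi) - (qj - qi)) + ε₂ - 1 : ℤ) : ℝ) := by
    rw [hl₁, hy₁, hx₁, e1, e2, e3, e4]
    field_simp
    push_cast
    ring
  have ek₂ : k₂ = ((((pj - pi) + (qj - qi)) + ε₁ - (ε₁*(1-ε₂) + ε₂*(1-ε₁)) : ℤ) : ℝ) := by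
    rw [hk₂, ek₁]; push_cast; ring
  have el₂ : l₂ = ((-((pj - pi) - (qj - qi)) + ε₂ : ℤ) : ℝ) := by
    rw [hl₂, el₁]; push_cast; ring
  refine ⟨?_, ?_, ?_, ?_⟩
  · rw [ek₁, habs1, ← Int.cast_abs, ← Int.cast_add]
    congr 1
    rcases lt_trichotomy ((pj - pi) + (qj - qi)) 0 with h | h | h
    · have := hσ₁neg h; rcases hε₁ with h1 | h1 <;> rcases hε₂ with h2 | h2 <;>
        subst h1 <;> subst h2 <;> (simp only [Int.abs_eq_natAbs]; omega)
    · have := hσ₁zero h; rcases hε₁ with h1 | h1 <;> rcases hε₂ with h2 | h2 <;>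
        subst h1 <;> subst h2 <;> (simp only [Int.abs_eq_natAbs]; omega)
    · have := hσ₁pos h; rcases hε₁ with h1 | h1 <;> rcases hε₂ with h2 | h2 <;>
        subst h1 <;> subst h2 <;> (simp only [Int.abs_eq_natAbs]; omega)
  · rw [el₁, habs2, ← Int.cast_abs, ← Int.cast_add]
    congr 1
    rcases lt_trichotomy ((pj - pi) - (qj - qi)) 0 with h | h | h
    · have := hσ₂neg h; rcases hε₂ with h2 | h2 <;> subst h2 <;> (simp only [Int.abs_eq_natAbs]; omega)
    · have := hσ₂zero h; rcases hε₂ with h2 | h2 <;> subst h2 <;> (simp only [Int.abs_eq_natAbs]; omega)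
    · have := hσ₂pos h; rcases hε₂ with h2 | h2 <;> subst h2 <;> (simp only [Int.abs_eq_natAbs]; omega)
  · rw [ek₂, habs1, ← Int.cast_abs, ← Int.cast_add]
    congr 1
    rcases lt_trichotomy ((pj - pi) + (qj - qi)) 0 with h | h | h
    · have := hσ₁neg h; rcases hε₁ with h1 | h1 <;> rcases hε₂ with h2 | h2 <;>
        subst h1 <;> subst h2 <;> (simp only [Int.abs_eq_natAbs]; omega)
    · have := hσ₁zero h; rcases hε₁ with h1 | h1 <;> rcases hε₂ with h2 | h2 <;>
        subst h1 <;> subst h2 <;> (simp only [Int.abs_eq_natAbs]; omega)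
    · have := hσ₁pos h; rcases hε₁ with h1 | h1 <;> rcases hε₂ with h2 | h2 <;>
        subst h1 <;> subst h2 <;> (simp only [Int.abs_eq_natAbs]; omega)
  · rw [el₂, habs2, ← Int.cast_abs, ← Int.cast_sub]
    congr 1
    rcases lt_trichotomy ((pj - pi) - (qj - qi)) 0 with h | h | h
    · have := hσ₂neg h; rcases hε₂ with h2 | h2 <;> subst h2 <;> (simp only [Int.abs_eq_natAbs]; omega)
    · have := hσ₂zero h; rcases hε₂ with h2 | h2 <;> subst h2 <;> (simp only [Int.abs_eq_natAbs]; omega)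
    · have := hσ₂pos h; rcases hε₂ with h2 | h2 <;> subst h2 <;> (simp only [Int.abs_eq_natAbs]; omega)
end

section
/- Let 0 < a < 1, c = a/(1 + a²), and let r₁, r₂ ≥ 0 with r₁ + r₂ > 0. Then the function t ↦ Re f_{r₁,r₂}(t) is strictly decreasing on (0, π/2): if 0 < t₁ < t₂ < π/2 then Re f_{r₁,r₂}(t₂) < Re f_{r₁,r₂}(t₁). -/
/-!
With `e = -i w`, one has `i⁻¹ G(w) = (e - z)/√(2c)` where `z = √(e - √(2c)) √(e + √(2c))`
satisfies `z² = e² - 2c`, so `|e - z| |e + z| = 2c` and `|i⁻¹ G(w)| = √(2c) / (|e| |1 + u|)`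
with `u = z/e`. For `e` in the upper half-plane `u` lies in the right half-plane, hence is the
principal square root of `1 - 2c/e²`. The two points `e = e^{it}` and `e = -e^{-it}` give
conjugate values `q, q̄` of `1 - 2c/e²`, so `Re f = (r₁ + r₂) log (√(2c) / |1 + √q|)` with
`q = 1 - 2c e^{2it}`. Finally `|1 + √q|² = 1 + |q| + 2 Re √q` grows with `|q|` and `Re q`,
and both grow as `cos 2t` decreases.
-/

noncomputable section

/-- The saddle-point function
`f_{r₁,r₂}(t) = r₁·log(i⁻¹ G(i e^{it})) + r₂·log(i⁻¹ G(−i e^{−it}))`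
with the principal branch of the complex logarithm. -/
def fsaddle (c r1 r2 t : ℝ) : ℂ :=
  r1 * Complex.log (Complex.I⁻¹ * Gfun c (Complex.I * Complex.exp (Complex.I * t))) +
  r2 * Complex.log (Complex.I⁻¹ * Gfun c (-Complex.I * Complex.exp (-Complex.I * t)))

open Complex ComplexConjugate

lemma csqrt_eq_cpow_inv_two (z : ℂ) : csqrt z = z ^ (2⁻¹ : ℂ) := by
  rw [csqrt, one_div]

lemma csqrt_eq_of_sq_eq {z u : ℂ} (hu : 0 < u.re) (h : u ^ 2 = z) : csqrt z = u := by
  rw [csqrt_eq_cpow_inv_two, ← h, sq_cpow_two_inv hu]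

lemma re_csqrt (z : ℂ) : (csqrt z).re = √((‖z‖ + z.re) / 2) := by
  rw [csqrt_eq_cpow_inv_two, cpow_inv_two_re]

lemma re_csqrt_pos {z : ℂ} (hz : z.im ≠ 0) : 0 < (csqrt z).re := by
  rw [re_csqrt]
  have := abs_re_lt_norm.2 hz
  apply Real.sqrt_pos.2
  linarith [neg_abs_le z.re]

lemma im_csqrt_pos {z : ℂ} (hz : 0 < z.im) : 0 < (csqrt z).im := by
  rw [csqrt_eq_cpow_inv_two, cpow_inv_two_im_eq_sqrt hz.le]
  have := abs_re_lt_norm.2 hz.ne'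
  apply Real.sqrt_pos.2
  linarith [le_abs_self z.re]

lemma im_mul_csqrt_pos {z w : ℂ} (hz : 0 < z.im) (hw : 0 < w.im) :
    0 < (csqrt z * csqrt w).im := by
  rw [mul_im]
  have := mul_pos (re_csqrt_pos hz.ne') (im_csqrt_pos hw)
  have := mul_pos (im_csqrt_pos hz) (re_csqrt_pos hw.ne')
  linarith

lemma norm_one_add_csqrt_sq (q : ℂ) :
    ‖1 + csqrt q‖ ^ 2 = 1 + ‖q‖ + 2 * √((‖q‖ + q.re) / 2) := by
  have hnorm : ‖csqrt q‖ ^ 2 = ‖q‖ := by rw [← norm_pow, csqrt_sq]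
  rw [← re_csqrt, ← hnorm, Complex.sq_norm, Complex.sq_norm, normSq_apply, normSq_apply]
  simp only [add_re, one_re, add_im, one_im]
  ring

lemma norm_one_add_csqrt_pos (q : ℂ) : 0 < ‖1 + csqrt q‖ := by
  have h := norm_one_add_csqrt_sq q
  have : 0 ≤ 2 * √((‖q‖ + q.re) / 2) := by positivity
  nlinarith [norm_nonneg (1 + csqrt q), norm_nonneg q]

lemma norm_one_add_csqrt_conj (q : ℂ) : ‖1 + csqrt (conj q)‖ = ‖1 + csqrt q‖ := by
  rw [← sq_eq_sq₀ (norm_nonneg _) (norm_nonneg _), norm_one_add_csqrt_sq,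
    norm_one_add_csqrt_sq, norm_conj, conj_re]

lemma norm_one_add_csqrt_lt {q₁ q₂ : ℂ} (hnorm : ‖q₁‖ < ‖q₂‖) (hre : q₁.re ≤ q₂.re) :
    ‖1 + csqrt q₁‖ < ‖1 + csqrt q₂‖ := by
  rw [← sq_lt_sq₀ (norm_nonneg _) (norm_nonneg _), norm_one_add_csqrt_sq,
    norm_one_add_csqrt_sq]
  have : √((‖q₁‖ + q₁.re) / 2) ≤ √((‖q₂‖ + q₂.re) / 2) := by gcongr
  linarith

lemma sq_norm_one_sub_mul_exp (a φ : ℝ) :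
    ‖1 - a * exp (I * φ)‖ ^ 2 = 1 - 2 * a * Real.cos φ + a ^ 2 := by
  rw [Complex.sq_norm, normSq_apply]
  simp only [sub_re, sub_im, one_re, one_im, re_ofReal_mul, im_ofReal_mul, mul_comm I,
    exp_ofReal_mul_I_re, exp_ofReal_mul_I_im]
  linear_combination a ^ 2 * Real.sin_sq_add_cos_sq φ

lemma norm_one_add_csqrt_one_sub_mul_exp_lt {a φ₁ φ₂ : ℝ} (ha : 0 < a)
    (hφ : Real.cos φ₂ < Real.cos φ₁) :
    ‖1 + csqrt (1 - a * exp (I * φ₁))‖ < ‖1 + csqrt (1 - a * exp (I * φ₂))‖ := by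
  have hre (φ : ℝ) : (1 - a * exp (I * φ)).re = 1 - a * Real.cos φ := by
    simp [mul_comm I, exp_ofReal_mul_I_re]
  apply norm_one_add_csqrt_lt
  · rw [← sq_lt_sq₀ (norm_nonneg _) (norm_nonneg _), sq_norm_one_sub_mul_exp,
      sq_norm_one_sub_mul_exp]
    nlinarith
  · rw [hre, hre]
    nlinarith

lemma re_div_pos_of_sq_eq_sq_sub (s : ℝ) {e z : ℂ} (he : 0 < e.im) (hz : 0 < z.im)
    (h : z ^ 2 = e ^ 2 - s ^ 2) : 0 < (z / e).re := by
  have he0 : e ≠ 0 := fun h0 => by simp [h0] at he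
  set u := z / e
  have hzu : z = e * u := (mul_div_cancel₀ z he0).symm
  rw [hzu] at h hz
  have him := congrArg im h
  have hre := congrArg re h
  simp only [sq, mul_re, mul_im, sub_re, sub_im, ofReal_re, ofReal_im] at him hre hz
  set a := e.re
  set b := e.im
  set x := u.re
  set y := u.im
  -- `Im (u²) = s² Im (e²) / ‖e‖⁴`, cleared of denominators
  have key : x * y * (a ^ 2 + b ^ 2) ^ 2 = a * b * s ^ 2 := by
    linear_combination (a*a - b*b) * him / 2 - a * b * hre
  by_contra! hx
  have hay : 0 < a * y := by nlinarith
  rcases hx.lt_or_eq with hx | hx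
  · have hneg : x * (a * y) * (a ^ 2 + b ^ 2) ^ 2 < 0 :=
      mul_neg_of_neg_of_pos (mul_neg_of_neg_of_pos hx hay) (by positivity)
    have : 0 ≤ a ^ 2 * b * s ^ 2 := by positivity
    linarith [show x * (a * y) * (a ^ 2 + b ^ 2) ^ 2 = a ^ 2 * b * s ^ 2 by
      linear_combination a * key]
  · have hab : a * b * (1 + y ^ 2) = 0 := by
      rw [hx] at him
      linear_combination -him / 2
    have ha : a = 0 := by
      rcases mul_eq_zero.1 hab with hab | hy
      · exact (mul_eq_zero.1 hab).resolve_right he.ne'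
      · nlinarith
    rw [ha, zero_mul] at hay
    exact hay.false

lemma sqrtc_I_mul (c : ℝ) (e : ℂ) :
    sqrtc c (I * e) = I * (csqrt (e - √(2 * c)) * csqrt (e + √(2 * c))) := by
  have hI : I * (I * e) = -e := by rw [← mul_assoc, I_mul_I, neg_one_mul]
  rw [sqrtc, hI, mul_assoc]
  ring_nf

lemma norm_I_inv_mul_Gfun {c : ℝ} (hc : 0 < c) {e : ℂ} (he : 0 < e.im) :
    ‖I⁻¹ * Gfun c (I * e)‖ = √(2 * c) / (‖e‖ * ‖1 + csqrt (1 - 2 * c / e ^ 2)‖) := by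
  set s := √(2 * c)
  have hs : 0 < s := Real.sqrt_pos.2 (by positivity)
  have hs2 : (s : ℂ) ^ 2 = 2 * c := by
    rw [← ofReal_pow, Real.sq_sqrt (by positivity)]; push_cast; ring
  have he0 : e ≠ 0 := fun h0 => by simp [h0] at he
  set z := csqrt (e - s) * csqrt (e + s)
  have hz : 0 < z.im := im_mul_csqrt_pos (by simpa using he) (by simpa using he)
  have hz2 : z ^ 2 = e ^ 2 - s ^ 2 := by
    rw [mul_pow, csqrt_sq, csqrt_sq]; ring
  set u := z / e
  have hu : 0 < u.re := re_div_pos_of_sq_eq_sq_sub s he hz hz2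
  have hcsqrt : csqrt (1 - 2 * c / e ^ 2) = u := by
    apply csqrt_eq_of_sq_eq hu
    rw [div_pow, hz2, ← hs2]
    field_simp
  have hG : I⁻¹ * Gfun c (I * e) = (e - z) / s := by
    rw [Gfun, sqrtc_I_mul, ← mul_sub, ← mul_assoc, mul_comm I⁻¹, mul_assoc, ← mul_assoc I⁻¹,
      inv_mul_cancel₀ I_ne_zero, one_mul, div_eq_inv_mul]
  have hplus : e + z = e * (1 + u) := by simp only [u]; field_simp
  have hprod : (e - z) * (e + z) = s ^ 2 := by linear_combination -hz2
  have h1u : 1 + u ≠ 0 := fun h1 => by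
    have := congrArg re h1
    simp only [add_re, one_re, zero_re] at this
    linarith
  have hplus0 : ‖e + z‖ ≠ 0 := by
    rw [hplus]
    exact norm_ne_zero_iff.2 (mul_ne_zero he0 h1u)
  have hminus : ‖e - z‖ = s ^ 2 / ‖e + z‖ := by
    rw [eq_div_iff hplus0, ← norm_mul, hprod, norm_pow, norm_real, Real.norm_of_nonneg hs.le]
  rw [hG, hcsqrt, norm_div, hminus, norm_real, Real.norm_of_nonneg hs.le, hplus, norm_mul]
  field_simp

lemma re_fsaddle {c : ℝ} (hc : 0 < c) (r1 r2 : ℝ) {t : ℝ} (ht0 : 0 < t) (htπ : t < Real.pi) :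
    (fsaddle c r1 r2 t).re
      = (r1 + r2) * Real.log (√(2 * c) / ‖1 + csqrt (1 - 2 * c * exp (I * (2 * t)))‖) := by
  have hsin : 0 < Real.sin t := Real.sin_pos_of_pos_of_lt_pi ht0 htπ
  have hexp2 : exp (I * t) ^ 2 = exp (I * (2 * t)) := by rw [← exp_nat_mul]; ring_nf
  have hG₁ : ‖I⁻¹ * Gfun c (I * exp (I * t))‖
      = √(2 * c) / ‖1 + csqrt (1 - 2 * c * exp (I * (2 * t)))‖ := by
    have hconj : 1 - 2 * c / exp (I * t) ^ 2 = conj (1 - 2 * c * exp (I * (2 * t))) := by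
      rw [hexp2, div_eq_mul_inv, ← exp_neg]
      simp [← exp_conj, map_ofNat]
    rw [norm_I_inv_mul_Gfun hc (by simpa [exp_im] using hsin), norm_exp_I_mul_ofReal, one_mul,
      hconj, norm_one_add_csqrt_conj]
  have hG₂ : ‖I⁻¹ * Gfun c (-I * exp (-I * t))‖
      = √(2 * c) / ‖1 + csqrt (1 - 2 * c * exp (I * (2 * t)))‖ := by
    have hw : -I * exp (-I * t) = I * -exp (-I * t) := by ring
    have hnorm : ‖-exp (-I * t)‖ = 1 := by
      rw [norm_neg, neg_mul, ← mul_neg, ← ofReal_neg, norm_exp_I_mul_ofReal]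
    have hsq : 2 * c / (-exp (-I * t)) ^ 2 = 2 * c * exp (I * (2 * t)) := by
      rw [neg_sq, ← exp_nat_mul, div_eq_mul_inv, ← exp_neg]; ring_nf
    have him : 0 < (-exp (-I * t)).im := by
      rw [neg_im, neg_mul, ← mul_neg, ← ofReal_neg, exp_im]
      simpa using hsin
    rw [hw, norm_I_inv_mul_Gfun hc him, hnorm, one_mul, hsq]
  rw [fsaddle, add_re, re_ofReal_mul, re_ofReal_mul, log_re, log_re, hG₁, hG₂]
  ring

theorem stmt13_general (a c : ℝ) (ha0 : 0 < a) (hc : c = a/(1+a^2))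
    (r1 r2 : ℝ) (hr : 0 < r1 + r2)
    (t₁ t₂ : ℝ) (ht₁ : 0 < t₁) (ht : t₁ < t₂) (ht₂ : t₂ < Real.pi/2) :
    (fsaddle c r1 r2 t₂).re < (fsaddle c r1 r2 t₁).re := by
  have hc0 : 0 < c := by rw [hc]; positivity
  rw [re_fsaddle hc0 r1 r2 (ht₁.trans ht) (by linarith [Real.pi_pos]),
    re_fsaddle hc0 r1 r2 ht₁ (by linarith [Real.pi_pos])]
  have hcos : Real.cos (2 * t₂) < Real.cos (2 * t₁) :=
    Real.cos_lt_cos_of_nonneg_of_le_pi (by linarith) (by linarith) (by linarith)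
  have hmono := norm_one_add_csqrt_one_sub_mul_exp_lt (by positivity : 0 < 2 * c) hcos
  push_cast at hmono
  have hs : 0 < √(2 * c) := Real.sqrt_pos.2 (by positivity)
  refine mul_lt_mul_of_pos_left (Real.log_lt_log (div_pos hs (norm_one_add_csqrt_pos _)) ?_) hr
  exact div_lt_div_of_pos_left hs (norm_one_add_csqrt_pos _) hmono

theorem stmt13 (a c : ℝ) (ha0 : 0 < a) (ha1 : a < 1) (hc : c = a/(1+a^2))
    (r1 r2 : ℝ) (hr1 : 0 ≤ r1) (hr2 : 0 ≤ r2) (hr : 0 < r1 + r2)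
    (t₁ t₂ : ℝ) (ht₁ : 0 < t₁) (ht : t₁ < t₂) (ht₂ : t₂ < Real.pi/2) :
    (fsaddle c r1 r2 t₂).re < (fsaddle c r1 r2 t₁).re :=
  stmt13_general a c ha0 hc r1 r2 hr t₁ t₂ ht₁ ht ht₂

end
end

section
/- Set a = 1 − ε and c = a/(1 + a²) for 0 < ε < 1. Then: (i) there exists C > 0 such that 1/|e^{2 i ε² t} − 2c| ≤ C·ε^{−2} for all t > 0 and all 0 < ε < 1; and (ii) there exist C' > 0 and ε₀ > 0 such that for all 0 < ε < ε₀ and all t with 0 < t ≤ (π/2)·ε^{−1/2}, one has |ε²/|e^{2 i ε² t} − 2c| − 2/√(1 + 16 t²)| ≤ C'·ε. -/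
/-!
Write `r = 2a/(1 + a²)`, so that `1 - r = ε²/(1 + a²)` lies between `ε²/2` and `ε²`, and put
`θ = 2ε²t`. Then `‖e^{iθ} - r‖² = (1 - r)² + 2r(1 - cos θ)`. The reverse triangle inequality gives
`‖e^{iθ} - r‖ ≥ 1 - r ≥ ε²/2`, which is (i). For (ii), the constraint on `t` means `εt² ≤ 4`, so
`θ² ≤ 16ε³`; expanding `cos θ` to fourth order then shows that `‖e^{iθ} - r‖²` equals
`ε⁴/4 + θ² = ε⁴(1 + 16t²)/4` up to `O(ε⁵)`. Both squared quantities are at least `ε⁴/4`, so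
their reciprocal square roots differ by `O(ε⁵)/ε⁶`.
-/

open Complex

lemma norm_exp_mul_I_sub_ofReal_sq (θ r : ℝ) :
    ‖exp (θ * I) - r‖ ^ 2 = (1 - r) ^ 2 + 2 * r * (1 - Real.cos θ) := by
  have h : exp (θ * I) - r = ((Real.cos θ - r : ℝ) : ℂ) + (Real.sin θ : ℝ) * I := by
    rw [exp_mul_I, ← ofReal_cos, ← ofReal_sin]; push_cast; ring
  rw [h, Complex.sq_norm, normSq_add_mul_I]
  linear_combination Real.sin_sq_add_cos_sq θ

lemma one_sub_le_norm_exp_mul_I_sub_ofReal (θ : ℝ) {r : ℝ} (hr : 0 ≤ r) :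
    1 - r ≤ ‖exp (θ * I) - r‖ := by
  simpa only [norm_exp_ofReal_mul_I, Complex.norm_of_nonneg hr] using
    norm_sub_norm_le (exp (θ * I)) r

lemma abs_two_mul_one_sub_cos_sub_sq_le {θ r : ℝ} (hθ : |θ| ≤ 1) (hr₀ : 0 ≤ r) (hr₁ : r ≤ 1) :
    |2 * r * (1 - Real.cos θ) - θ ^ 2| ≤ θ ^ 4 / 8 + (1 - r) * θ ^ 2 := by
  have hcos := Real.cos_bound hθ
  rw [abs_le] at hcos ⊢
  have hθ4 : |θ| ^ 4 = θ ^ 4 := by rw [pow_abs]; exact abs_of_nonneg (by positivity)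
  rw [hθ4] at hcos
  have hθ2 := sq_nonneg θ
  constructor <;> nlinarith [mul_nonneg hr₀ (sq_nonneg (θ ^ 2))]

lemma abs_inv_sub_inv_le {m s s₀ : ℝ} (hm : 0 < m) (hs : m ≤ s) (hs₀ : m ≤ s₀) :
    |s⁻¹ - s₀⁻¹| ≤ |s ^ 2 - s₀ ^ 2| / (2 * m ^ 3) := by
  have hpos : 0 < s := hm.trans_le hs
  have hpos₀ : 0 < s₀ := hm.trans_le hs₀
  have h : s⁻¹ - s₀⁻¹ = (s₀ ^ 2 - s ^ 2) / (s * s₀ * (s + s₀)) := by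
    field_simp; ring
  rw [h, abs_div, abs_sub_comm (s₀ ^ 2), abs_of_pos (show 0 < s * s₀ * (s + s₀) by positivity)]
  refine div_le_div_of_nonneg_left (abs_nonneg _) (by positivity) ?_
  calc 2 * m ^ 3 = m * m * (m + m) := by ring
    _ ≤ s * s₀ * (s + s₀) := by gcongr

section Parameter

variable {ε : ℝ}

lemma one_sub_two_mul_div_one_add_sq (a : ℝ) :
    1 - 2 * (a / (1 + a ^ 2)) = (1 - a) ^ 2 / (1 + a ^ 2) := by
  field_simp; ring

lemma sq_div_two_le_one_sub_two_mul (hε₀ : 0 ≤ ε) (hε₁ : ε ≤ 1) :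
    ε ^ 2 / 2 ≤ 1 - 2 * ((1 - ε) / (1 + (1 - ε) ^ 2)) := by
  rw [one_sub_two_mul_div_one_add_sq, sub_sub_cancel]
  gcongr
  nlinarith

lemma one_sub_two_mul_le_sq : 1 - 2 * ((1 - ε) / (1 + (1 - ε) ^ 2)) ≤ ε ^ 2 := by
  rw [one_sub_two_mul_div_one_add_sq, sub_sub_cancel]
  exact div_le_self (sq_nonneg ε) (le_add_of_nonneg_right (sq_nonneg _))

lemma abs_sq_one_sub_two_mul_sub_le (hε₀ : 0 ≤ ε) (hε₁ : ε ≤ 1) :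
    |(1 - 2 * ((1 - ε) / (1 + (1 - ε) ^ 2))) ^ 2 - ε ^ 4 / 4| ≤ 2 * ε ^ 5 := by
  set p := 1 + (1 - ε) ^ 2
  have hp : 1 ≤ p := le_add_of_nonneg_right (sq_nonneg _)
  -- `4 - p² = ε(2 - ε)(2 + p)` and `(2 + p)/(4p²) ≤ 1`
  have h : (1 - 2 * ((1 - ε) / p)) ^ 2 - ε ^ 4 / 4
      = ε ^ 5 * (2 - ε) * ((2 + p) / (4 * p ^ 2)) := by
    rw [one_sub_two_mul_div_one_add_sq, sub_sub_cancel]; field_simp; ring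
  have hq : (2 + p) / (4 * p ^ 2) ≤ 1 := by rw [div_le_one (by positivity)]; nlinarith
  have h2ε : 0 ≤ 2 - ε := by linarith
  rw [h, abs_of_nonneg (by positivity)]
  calc ε ^ 5 * (2 - ε) * ((2 + p) / (4 * p ^ 2)) ≤ ε ^ 5 * 2 * 1 := by
        gcongr
        linarith
    _ = 2 * ε ^ 5 := by ring

lemma two_mul_div_nonneg (hε : ε ≤ 1) : 0 ≤ 2 * ((1 - ε) / (1 + (1 - ε) ^ 2)) := by
  have : 0 ≤ 1 - ε := by linarith
  positivity

lemma sq_div_two_le_norm_exp_mul_I_sub (hε₀ : 0 ≤ ε) (hε₁ : ε ≤ 1) (θ : ℝ) :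
    ε ^ 2 / 2 ≤ ‖exp (θ * I) - ((2 * ((1 - ε) / (1 + (1 - ε) ^ 2)) : ℝ) : ℂ)‖ :=
  (sq_div_two_le_one_sub_two_mul hε₀ hε₁).trans
    (one_sub_le_norm_exp_mul_I_sub_ofReal θ (two_mul_div_nonneg hε₁))

lemma abs_sq_div_norm_exp_sub_le (hε₀ : 0 < ε) (hε₁ : ε ≤ 1 / 4) {θ : ℝ}
    (hθ : θ ^ 2 ≤ 16 * ε ^ 3) :
    |ε ^ 2 / ‖exp (θ * I) - ((2 * ((1 - ε) / (1 + (1 - ε) ^ 2)) : ℝ) : ℂ)‖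
        - ε ^ 2 / √(ε ^ 4 / 4 + θ ^ 2)| ≤ 104 * ε := by
  set r := 2 * ((1 - ε) / (1 + (1 - ε) ^ 2))
  set s := ‖exp (θ * I) - r‖
  set s₀ := √(ε ^ 4 / 4 + θ ^ 2)
  have hr_sq : 1 - r ≤ ε ^ 2 := one_sub_two_mul_le_sq
  have hr₀ : 0 ≤ r := two_mul_div_nonneg (by linarith)
  have hr₁ : r ≤ 1 := by linarith [sq_div_two_le_one_sub_two_mul hε₀.le (by linarith), sq_nonneg ε]
  have hm : 0 < ε ^ 2 / 2 := by positivity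
  have hs : ε ^ 2 / 2 ≤ s := sq_div_two_le_norm_exp_mul_I_sub hε₀.le (by linarith) θ
  have hs₀ : ε ^ 2 / 2 ≤ s₀ := Real.le_sqrt_of_sq_le (by nlinarith)
  have hε3 : ε ^ 3 ≤ 1 / 64 := by
    calc ε ^ 3 ≤ (1 / 4) ^ 3 := by gcongr
      _ = 1 / 64 := by norm_num
  have hθ1 : |θ| ≤ 1 := (sq_le_one_iff_abs_le_one θ).1 (by linarith)
  have hcos := abs_two_mul_one_sub_cos_sub_sq_le hθ1 hr₀ hr₁
  have hparam := abs_sq_one_sub_two_mul_sub_le hε₀.le (by linarith)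
  have hdiff : |s ^ 2 - s₀ ^ 2| ≤ 26 * ε ^ 5 := by
    have hsplit : s ^ 2 - s₀ ^ 2
        = ((1 - r) ^ 2 - ε ^ 4 / 4) + (2 * r * (1 - Real.cos θ) - θ ^ 2) := by
      rw [norm_exp_mul_I_sub_ofReal_sq, Real.sq_sqrt (by positivity)]; ring
    have hθ4 : θ ^ 4 / 8 ≤ 8 * ε ^ 5 := by
      have := mul_le_mul hθ hθ (sq_nonneg θ) (by positivity)
      nlinarith [pow_pos hε₀ 5]
    have hθ2 : (1 - r) * θ ^ 2 ≤ 16 * ε ^ 5 := by nlinarith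
    rw [hsplit]
    linarith [abs_add_le ((1 - r) ^ 2 - ε ^ 4 / 4) (2 * r * (1 - Real.cos θ) - θ ^ 2)]
  calc |ε ^ 2 / s - ε ^ 2 / s₀| = ε ^ 2 * |s⁻¹ - s₀⁻¹| := by
        rw [div_eq_mul_inv, div_eq_mul_inv, ← mul_sub, abs_mul, abs_of_nonneg (sq_nonneg ε)]
    _ ≤ ε ^ 2 * (26 * ε ^ 5 / (2 * (ε ^ 2 / 2) ^ 3)) := by
        gcongr
        exact (abs_inv_sub_inv_le hm hs hs₀).trans (by gcongr)
    _ = 104 * ε := by field_simp; ring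

end Parameter

lemma mul_sq_le_of_le_mul_rpow {ε t : ℝ} (hε : 0 < ε) (ht : 0 ≤ t)
    (h : t ≤ Real.pi / 2 * ε ^ (-(1 / 2) : ℝ)) : ε * t ^ 2 ≤ (Real.pi / 2) ^ 2 := by
  rw [Real.rpow_neg hε.le, ← Real.sqrt_eq_rpow, ← div_eq_mul_inv,
    le_div_iff₀ (Real.sqrt_pos.2 hε)] at h
  calc ε * t ^ 2 = (t * √ε) ^ 2 := by rw [mul_pow, Real.sq_sqrt hε.le]; ring
    _ ≤ (Real.pi / 2) ^ 2 := by gcongr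

lemma exp_two_mul_I_sub_two_mul (x c : ℝ) :
    exp (2 * I * (x : ℂ)) - 2 * (c : ℂ) = exp (((2 * x : ℝ) : ℂ) * I) - ((2 * c : ℝ) : ℂ) := by
  push_cast; ring_nf

theorem stmt16 :
    (∃ C > 0, ∀ ε : ℝ, 0 < ε → ε < 1 → ∀ t : ℝ, 0 < t →
      1 / ‖Complex.exp (2*Complex.I*((ε^2*t : ℝ) : ℂ))
            - 2*(((1-ε)/(1+(1-ε)^2) : ℝ) : ℂ)‖
        ≤ C / ε^2) ∧
    (∃ C' > 0, ∃ ε₀ > 0, ∀ ε : ℝ, 0 < ε → ε < ε₀ → ∀ t : ℝ, 0 < t →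
      t ≤ Real.pi/2 * ε ^ (-(1/2) : ℝ) →
      |ε^2 / ‖Complex.exp (2*Complex.I*((ε^2*t : ℝ) : ℂ))
            - 2*(((1-ε)/(1+(1-ε)^2) : ℝ) : ℂ)‖
          - 2 / Real.sqrt (1 + 16*t^2)| ≤ C' * ε) := by
  refine ⟨⟨2, two_pos, fun ε hε hε₁ t _ => ?_⟩, ⟨104, by norm_num, 1 / 4, by norm_num,
    fun ε hε hε₁ t ht htε => ?_⟩⟩ <;> rw [exp_two_mul_I_sub_two_mul]
  · have hs := sq_div_two_le_norm_exp_mul_I_sub hε.le hε₁.le (2 * (ε ^ 2 * t))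
    calc _ ≤ 1 / (ε ^ 2 / 2) := one_div_le_one_div_of_le (by positivity) hs
      _ = 2 / ε ^ 2 := one_div_div _ _
  · have hεt : ε * t ^ 2 ≤ 4 :=
      (mul_sq_le_of_le_mul_rpow hε ht.le htε).trans (by nlinarith [Real.pi_le_four, Real.pi_pos])
    have hrhs : 2 / √(1 + 16 * t ^ 2) = ε ^ 2 / √(ε ^ 4 / 4 + (2 * (ε ^ 2 * t)) ^ 2) := by
      rw [show ε ^ 4 / 4 + (2 * (ε ^ 2 * t)) ^ 2 = (ε ^ 2 / 2) ^ 2 * (1 + 16 * t ^ 2) by ring,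
        Real.sqrt_mul (by positivity), Real.sqrt_sq (by positivity)]
      field_simp
    rw [hrhs]
    exact abs_sq_div_norm_exp_sub_le hε hε₁.le (by nlinarith [pow_pos hε 3])
end

section
/- Let 0 < c < 1/2. There exists R₀ ∈ (0, 1) such that for every R ∈ (R₀, 1) the following holds: setting A = √(c/2)·(1/R − R) and B = √(c/2)·(R + 1/R), for every point w = −A·sin θ + i·B·cos θ (θ ∈ [0, 2π)) on the ellipse E_R = J(i·Γ_R) (the image of the circle of radius R under u ↦ √(c/2)·(u − 1/u) precomposed with multiplication by i), the point 1/w lies strictly outside the closed region bounded by E_R, i.e. (Re(1/w))²/A² + (Im(1/w))²/B² > 1. -/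
/-!
The point `w = -A sin θ + i B cos θ` lies on the ellipse `x²/A² + y²/B² = 1`, and since
`1/w = conj w / |w|²`, the point `1/w` satisfies `x²/A² + y²/B² = 1/|w|⁴`. For `A ≤ B` one has
`|w| ≤ B`, so `1/w` lies outside the ellipse as soon as `B < 1`. For `J(i Γ_R)` the semi-axis
`B = s(R + 1/R)`, `s = √(c/2)`, tends to `2s = √(2c) < 1` as `R → 1`; explicitly `B < 1` once
`R > s/(1 - s)`.
-/

open Complex

noncomputable def ellipseForm (A B : ℝ) (z : ℂ) : ℝ := z.re ^ 2 / A ^ 2 + z.im ^ 2 / B ^ 2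

noncomputable def ellipsePoint (A B θ : ℝ) : ℂ := ⟨-(A * Real.sin θ), B * Real.cos θ⟩

lemma ellipseForm_inv (A B : ℝ) (z : ℂ) :
    ellipseForm A B z⁻¹ = ellipseForm A B z / normSq z ^ 2 := by
  simp only [ellipseForm, inv_re, inv_im]
  ring

lemma ellipseForm_ellipsePoint {A B : ℝ} (hA : A ≠ 0) (hB : B ≠ 0) (θ : ℝ) :
    ellipseForm A B (ellipsePoint A B θ) = 1 := by
  simp only [ellipseForm, ellipsePoint]
  field_simp
  exact Real.sin_sq_add_cos_sq θ

lemma normSq_ellipsePoint (A B θ : ℝ) :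
    normSq (ellipsePoint A B θ) = A ^ 2 * Real.sin θ ^ 2 + B ^ 2 * Real.cos θ ^ 2 := by
  simp only [normSq_apply, ellipsePoint]
  ring

lemma normSq_ellipsePoint_le {A B : ℝ} (hA : 0 ≤ A) (hAB : A ≤ B) (θ : ℝ) :
    normSq (ellipsePoint A B θ) ≤ B ^ 2 := by
  have hA2 : A ^ 2 ≤ B ^ 2 := pow_le_pow_left₀ hA hAB 2
  rw [normSq_ellipsePoint]
  nlinarith [Real.sin_sq_add_cos_sq θ, sq_nonneg (Real.sin θ)]

lemma ellipsePoint_ne_zero {A B : ℝ} (hA : A ≠ 0) (hB : B ≠ 0) (θ : ℝ) :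
    ellipsePoint A B θ ≠ 0 := by
  intro h
  have h1 := ellipseForm_ellipsePoint hA hB θ
  simp [h, ellipseForm] at h1

theorem one_lt_ellipseForm_inv_ellipsePoint {A B : ℝ} (hA : 0 < A) (hAB : A ≤ B) (hB : B < 1)
    (θ : ℝ) : 1 < ellipseForm A B (ellipsePoint A B θ)⁻¹ := by
  have hN : 0 < normSq (ellipsePoint A B θ) :=
    normSq_pos.mpr (ellipsePoint_ne_zero hA.ne' (hA.trans_le hAB).ne' θ)
  have hN1 : normSq (ellipsePoint A B θ) < 1 :=
    (normSq_ellipsePoint_le hA.le hAB θ).trans_lt (by nlinarith)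
  rw [ellipseForm_inv, ellipseForm_ellipsePoint hA.ne' (hA.trans_le hAB).ne']
  exact one_lt_one_div (by positivity) (pow_lt_one₀ hN.le hN1 two_ne_zero)

lemma mul_add_one_div_lt_one {s R : ℝ} (hs : 0 < s) (hs1 : s < 1) (hR₀ : s / (1 - s) < R)
    (hR1 : R < 1) : s * (R + 1 / R) < 1 := by
  have hR : 0 < R := (div_pos hs (by linarith)).trans hR₀
  rw [div_lt_iff₀ (by linarith)] at hR₀
  have h : s * (R + 1 / R) * R < 1 * R := by
    rw [mul_assoc, add_mul, one_div_mul_cancel hR.ne']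
    nlinarith
  exact lt_of_mul_lt_mul_right h hR.le

theorem stmt19 (c : ℝ) (hc0 : 0 < c) (hc : c < 1/2) :
    ∃ R₀ : ℝ, 0 < R₀ ∧ R₀ < 1 ∧
      ∀ R : ℝ, R₀ < R → R < 1 →
        ∀ θ : ℝ, 0 ≤ θ → θ < 2*Real.pi →
          ∀ w : ℂ,
            w = ((-(Real.sqrt (c/2) * (1/R - R) * Real.sin θ) : ℝ) : ℂ)
                  + Complex.I * ((Real.sqrt (c/2) * (R + 1/R) * Real.cos θ : ℝ) : ℂ) →
            ((1/w).re)^2 / (Real.sqrt (c/2) * (1/R - R))^2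
                + ((1/w).im)^2 / (Real.sqrt (c/2) * (R + 1/R))^2 > 1 := by
  set s := √(c / 2)
  have hs : 0 < s := Real.sqrt_pos.mpr (by linarith)
  have hs2 : s < 1 / 2 := by
    rw [Real.sqrt_lt' one_half_pos]
    linarith
  refine ⟨s / (1 - s), div_pos hs (by linarith), by rw [div_lt_one (by linarith)]; linarith, ?_⟩
  intro R hR₀ hR1 θ _ _ w hw
  have hR : 0 < R := (div_pos hs (by linarith)).trans hR₀
  have hA : 0 < s * (1 / R - R) := mul_pos hs (by rw [sub_pos, lt_div_iff₀ hR]; nlinarith)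
  have hAB : s * (1 / R - R) ≤ s * (R + 1 / R) := by gcongr; linarith
  have hw' : w = ellipsePoint (s * (1 / R - R)) (s * (R + 1 / R)) θ := by
    apply Complex.ext <;>
      simp only [hw, ellipsePoint, add_re, add_im, mul_re, mul_im, I_re, I_im, ofReal_re,
        ofReal_im] <;> ring
  rw [hw', one_div]
  exact one_lt_ellipseForm_inv_ellipsePoint hA hAB
    (mul_add_one_div_lt_one hs (by linarith) hR₀ hR1) θ
end
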